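/- arXiv:2506.05800 — 3 statements merged into one kernel-verified Lean document; each statement's English description precedes it below -/
import Mathlib

section
/- Let r be a prime, a ≥ 1 an integer, e = r^a, and let ζ ∈ ℂ be a primitive e-th root of unity. Write R = ℤ[ζ] and let 𝔭 be the ideal of R generated by 1 − ζ. Let A be an R-algebra and let M, N be A-modules carrying compatible R-module structures that are free of finite rank as R-modules. If Hom_A(M, N) ≠ {0}, then there exists a nonzero A-linear map M/𝔭M → N/𝔭N; that is, Hom_A(M/𝔭M, N/𝔭N) ≠ {0}. -/
/-!
If every `A`-linear map `M → N` took values in `𝔭N`, then, `1 - ζ` being a non-zero-divisor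
on `N`, every such map would be `1 - ζ` times another one. Iterating, every value of `ψ` would
lie in `⋂ₖ 𝔭ᵏN`, which vanishes by Krull's intersection theorem: `ℤ[ζ]` is a Noetherian domain,
`N` is finite and torsion-free, and `𝔭` is proper because `Φ_{r^a}(1) = r`. Hence some `φ` has a
value outside `𝔭N`, and the map it induces on the quotients is nonzero.
-/

/-- `ℤ[ζ]`, the subring of `ℂ` generated by `ζ`. -/
noncomputable def cycloRing (ζ : ℂ) : Subalgebra ℤ ℂ := Algebra.adjoin ℤ {ζ}

/-- `ζ` as an element of `ℤ[ζ]`. -/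
noncomputable def cycloZeta (ζ : ℂ) : cycloRing ζ :=
  ⟨ζ, Algebra.self_mem_adjoin_singleton ℤ ζ⟩

/-- The `A`-submodule `𝔭M = (1 - ζ)M` of an `A`-module `M` with compatible
`ℤ[ζ]`-module structure. -/
noncomputable def pModule (ζ : ℂ) (A : Type) [Ring A] [Algebra (cycloRing ζ) A]
    (M : Type) [AddCommGroup M] [Module (cycloRing ζ) M] [Module A M]
    [IsScalarTower (cycloRing ζ) A M] : Submodule A M :=
  LinearMap.range ((1 - cycloZeta ζ) • (LinearMap.id : M →ₗ[A] M))

section DivisionByRegularElement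

variable {R A M N : Type*} [CommRing R] [Ring A] [Algebra R A]
  [AddCommGroup M] [Module A M]
  [AddCommGroup N] [Module R N] [Module A N] [IsScalarTower R A N]

lemma exists_eq_smul_apply_of_forall_mem_range_smul_id {π : R} (hπ : IsSMulRegular N π)
    (φ : M →ₗ[A] N) (hφ : ∀ x, φ x ∈ LinearMap.range (π • (LinearMap.id : N →ₗ[A] N))) :
    ∃ φ' : M →ₗ[A] N, ∀ x, φ x = π • φ' x := by
  let e := LinearEquiv.ofInjective (π • (LinearMap.id : N →ₗ[A] N)) hπ
  refine ⟨e.symm.toLinearMap ∘ₗ φ.codRestrict _ hφ, fun x => ?_⟩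
  exact (congrArg Subtype.val (e.apply_symm_apply ⟨φ x, hφ x⟩)).symm

lemma exists_eq_pow_smul_apply_of_forall_mem_range_smul_id {π : R} (hπ : IsSMulRegular N π)
    (hall : ∀ (φ : M →ₗ[A] N) x, φ x ∈ LinearMap.range (π • (LinearMap.id : N →ₗ[A] N)))
    (ψ : M →ₗ[A] N) (k : ℕ) : ∃ φ : M →ₗ[A] N, ∀ x, ψ x = π ^ k • φ x := by
  induction k with
  | zero => exact ⟨ψ, by simp⟩
  | succ k ih =>
    obtain ⟨φ, hφ⟩ := ih
    obtain ⟨φ', hφ'⟩ := exists_eq_smul_apply_of_forall_mem_range_smul_id hπ φ (hall φ)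
    exact ⟨φ', fun x => by rw [hφ, hφ', pow_succ, mul_smul]⟩

lemma IsHausdorff.eq_zero_of_forall_eq_pow_smul {π : R} [IsHausdorff (Ideal.span {π}) N]
    {y : N} (hy : ∀ k : ℕ, ∃ z, y = π ^ k • z) : y = 0 :=
  IsHausdorff.haus ‹_› y fun k => by
    obtain ⟨z, rfl⟩ := hy k
    rw [SModEq.zero, Ideal.span_singleton_pow]
    exact Submodule.smul_mem_smul (Ideal.mem_span_singleton_self _) Submodule.mem_top

theorem exists_apply_notMem_range_smul_id {π : R} [IsHausdorff (Ideal.span {π}) N]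
    (hπ : IsSMulRegular N π) {ψ : M →ₗ[A] N} (hψ : ψ ≠ 0) :
    ∃ (φ : M →ₗ[A] N) (x : M), φ x ∉ LinearMap.range (π • (LinearMap.id : N →ₗ[A] N)) := by
  by_contra! hall
  refine hψ (LinearMap.ext fun x => IsHausdorff.eq_zero_of_forall_eq_pow_smul (π := π) fun k => ?_)
  obtain ⟨φ, hφ⟩ := exists_eq_pow_smul_apply_of_forall_mem_range_smul_id hπ hall ψ k
  exact ⟨φ x, hφ x⟩

variable [Module R M] [IsScalarTower R A M]

lemma range_smul_id_le_comap (π : R) (φ : M →ₗ[A] N) :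
    LinearMap.range (π • (LinearMap.id : M →ₗ[A] M)) ≤
      (LinearMap.range (π • (LinearMap.id : N →ₗ[A] N))).comap φ := by
  rintro _ ⟨z, rfl⟩
  exact ⟨φ z, by simp [LinearMap.map_smul_of_tower]⟩

theorem exists_mapQ_range_smul_id_ne_zero {π : R} [IsHausdorff (Ideal.span {π}) N]
    (hπ : IsSMulRegular N π) {ψ : M →ₗ[A] N} (hψ : ψ ≠ 0) :
    ∃ f : (M ⧸ LinearMap.range (π • (LinearMap.id : M →ₗ[A] M))) →ₗ[A]
      (N ⧸ LinearMap.range (π • (LinearMap.id : N →ₗ[A] N))), f ≠ 0 := by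
  obtain ⟨φ, x, hx⟩ := exists_apply_notMem_range_smul_id hπ hψ
  refine ⟨Submodule.mapQ _ _ φ (range_smul_id_le_comap π φ), fun h => hx ?_⟩
  simpa [Submodule.Quotient.mk_eq_zero] using LinearMap.congr_fun h (Submodule.Quotient.mk x)

end DivisionByRegularElement

instance (ζ : ℂ) : IsNoetherianRing (cycloRing ζ) :=
  have : Algebra.FiniteType ℤ (cycloRing ζ) :=
    Algebra.FiniteType.adjoin_of_finite (Set.finite_singleton ζ)
  Algebra.FiniteType.isNoetherianRing ℤ _

lemma one_sub_cycloZeta_ne_zero {ζ : ℂ} {n : ℕ} (hn : 1 < n) (hζ : IsPrimitiveRoot ζ n) :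
    1 - cycloZeta ζ ≠ 0 := fun h =>
  hζ.ne_one hn (sub_eq_zero.mp (congrArg Subtype.val h : (1 : ℂ) - ζ = 0)).symm

open Polynomial in
lemma not_isUnit_one_sub_cycloZeta {r a : ℕ} (hr : r.Prime) (ha : 1 ≤ a) {ζ : ℂ}
    (hζ : IsPrimitiveRoot ζ (r ^ a)) : ¬IsUnit (1 - cycloZeta ζ) := by
  obtain ⟨k, rfl⟩ : ∃ k, a = k + 1 := ⟨a - 1, by omega⟩
  have hpos : 0 < r ^ (k + 1) := pow_pos hr.pos _
  rintro ⟨⟨_, v, hv, -⟩, rfl⟩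
  obtain ⟨P, hP⟩ : ∃ P : ℤ[X], aeval ζ P = v := by
    have hv : (v : ℂ) ∈ Algebra.adjoin ℤ {ζ} := v.2
    rwa [Algebra.adjoin_singleton_eq_range_aeval] at hv
  have hroot : aeval ζ ((1 - X) * P - 1) = 0 := by
    simpa [hP, sub_eq_zero, cycloZeta] using congrArg Subtype.val hv
  have hdvd : cyclotomic (r ^ (k + 1)) ℤ ∣ (1 - X) * P - 1 := by
    rw [cyclotomic_eq_minpoly hζ hpos]
    exact minpoly.isIntegrallyClosed_dvd (hζ.isIntegral hpos) hroot
  have := Fact.mk hr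
  have : (r : ℤ) ∣ -1 := by simpa using eval_dvd (x := 1) hdvd
  exact hr.not_dvd_one (by exact_mod_cast dvd_neg.mp this)

theorem statement1_general (r a : ℕ) (hr : r.Prime) (ha : 1 ≤ a) (ζ : ℂ)
    (hζ : IsPrimitiveRoot ζ (r ^ a))
    (A : Type) [Ring A] [Algebra (cycloRing ζ) A]
    (M N : Type) [AddCommGroup M] [AddCommGroup N]
    [Module (cycloRing ζ) M] [Module (cycloRing ζ) N]
    [Module A M] [Module A N]
    [IsScalarTower (cycloRing ζ) A M] [IsScalarTower (cycloRing ζ) A N]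
    [Module.Free (cycloRing ζ) N] [Module.Finite (cycloRing ζ) N]
    (hne : ∃ ψ : M →ₗ[A] N, ψ ≠ 0) :
    ∃ f : (M ⧸ pModule ζ A M) →ₗ[A] (N ⧸ pModule ζ A N), f ≠ 0 := by
  obtain ⟨ψ, hψ⟩ := hne
  have : IsHausdorff (Ideal.span {1 - cycloZeta ζ}) N :=
    .of_isTorsionFree _ _ (by
      rw [Ne, Ideal.span_singleton_eq_top]
      exact not_isUnit_one_sub_cycloZeta hr ha hζ)
  have hπ : IsSMulRegular N (1 - cycloZeta ζ) :=
    .of_ne_zero (one_sub_cycloZeta_ne_zero (Nat.one_lt_pow (by omega) hr.one_lt) hζ)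
  exact exists_mapQ_range_smul_id_ne_zero hπ hψ

/-- Let `r` be a prime, `a ≥ 1`, `e = r^a`, `ζ ∈ ℂ` a primitive `e`-th root of unity,
`R = ℤ[ζ]` and `𝔭 = (1 - ζ) ⊆ R`.  Let `A` be an `R`-algebra and `M`, `N` be `A`-modules
carrying compatible `R`-module structures which are free of finite rank as `R`-modules.
If `Hom_A(M, N) ≠ 0` then there is a nonzero `A`-linear map `M/𝔭M → N/𝔭N`. -/
theorem statement1 (r a : ℕ) (hr : r.Prime) (ha : 1 ≤ a) (ζ : ℂ)
    (hζ : IsPrimitiveRoot ζ (r ^ a))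
    (A : Type) [Ring A] [Algebra (cycloRing ζ) A]
    (M N : Type) [AddCommGroup M] [AddCommGroup N]
    [Module (cycloRing ζ) M] [Module (cycloRing ζ) N]
    [Module A M] [Module A N]
    [IsScalarTower (cycloRing ζ) A M] [IsScalarTower (cycloRing ζ) A N]
    [Module.Free (cycloRing ζ) M] [Module.Finite (cycloRing ζ) M]
    [Module.Free (cycloRing ζ) N] [Module.Finite (cycloRing ζ) N]
    (hne : ∃ ψ : M →ₗ[A] N, ψ ≠ 0) :
    ∃ f : (M ⧸ pModule ζ A M) →ₗ[A] (N ⧸ pModule ζ A N), f ≠ 0 :=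
  statement1_general r a hr ha ζ hζ A M N hne
end

section
/- Assume the straight-shape Carter–Payne setup: λ and μ are ℓ-multipartitions of n with μ strictly dominating λ in the dominance order, ν = λ ∪ μ is an ℓ-multipartition of n+γ, and [μ*] := [ν]∖[λ] and [λ*] := [ν]∖[μ] are congruent removable e-small straight shapes with every node of [μ*] preceding every node of [λ*]. Write [μ*]=[ξ⁰] ≺ [ξ¹] ≺ ⋯ ≺ [ξ^{c−1}] ≺ [ξ^c]=[λ*], where [ξ¹],…,[ξ^{c−1}] are the maximal (under inclusion) removable e-small straight shapes of [ν] that are subshapes of [μ*] and lie strictly between [μ*] and [λ*] in the node order. Then the tableau 𝔱*_μ := (𝔱_λ^ν σ_{μ*,ξ¹} ⋯ σ_{μ*,ξ^{c−1}} σ_{μ*,ξ^c})↓n is a standard μ-tableau, and moreover for every k ∈ {1,…,n} the residue of (𝔱*_μ)^{−1}(k) equals the residue of (𝔱^λ)^{−1}(k). -/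
/-!
Combinatorial framework for multipartitions, Young diagrams, residues, tableaux and shapes,
following the conventions of the paper (with rows, columns and components 0-indexed).
-/

namespace CarterPayne

/-- A node `(m, r, c)`: component `m`, row `r`, column `c` (all 0-indexed). -/
abbrev Node (ℓ : ℕ) := Fin ℓ × ℕ × ℕ

/-- The lexicographic order on nodes, by component, then row, then column. -/
def nodeLt {ℓ : ℕ} (N N' : Node ℓ) : Prop :=
  N.1 < N'.1 ∨ (N.1 = N'.1 ∧ (N.2.1 < N'.2.1 ∨ (N.2.1 = N'.2.1 ∧ N.2.2 < N'.2.2)))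

/-- The residue of a node `(m, r, c)` is `c - r + κ m ∈ ℤ/eℤ`. -/
def res {ℓ : ℕ} (e : ℕ) (κ : Fin ℓ → ZMod e) (N : Node ℓ) : ZMod e :=
  (N.2.2 : ZMod e) - (N.2.1 : ZMod e) + κ N.1

/-- `f : ℕ → ℕ` is a partition: weakly decreasing, eventually zero. -/
def IsPartitionFun (f : ℕ → ℕ) : Prop :=
  (∀ i j : ℕ, i ≤ j → f j ≤ f i) ∧ ∃ B : ℕ, ∀ i : ℕ, B ≤ i → f i = 0

/-- A multipartition: each component is a partition. -/
def IsMultipartition {ℓ : ℕ} (lam : Fin ℓ → ℕ → ℕ) : Prop :=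
  ∀ m : Fin ℓ, IsPartitionFun (lam m)

/-- The Young diagram of a multipartition. -/
def diagram {ℓ : ℕ} (lam : Fin ℓ → ℕ → ℕ) : Set (Node ℓ) :=
  {N | N.2.2 < lam N.1 N.2.1}

/-- A multipartition of `n`. -/
def IsMultipartitionOf {ℓ : ℕ} (n : ℕ) (lam : Fin ℓ → ℕ → ℕ) : Prop :=
  IsMultipartition lam ∧ (diagram lam).ncard = n

/-- The size of the `m`-th component. -/
noncomputable def compSize {ℓ : ℕ} (lam : Fin ℓ → ℕ → ℕ) (m : Fin ℓ) : ℕ :=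
  ∑ᶠ r : ℕ, lam m r

/-- The partial sums appearing in the dominance order. -/
noncomputable def domSum {ℓ : ℕ} (lam : Fin ℓ → ℕ → ℕ) (m : Fin ℓ) (r : ℕ) : ℕ :=
  (∑ i ∈ Finset.univ.filter (fun i : Fin ℓ => i < m), compSize lam i) +
    ∑ j ∈ Finset.range (r + 1), lam m j

/-- The dominance order on multipartitions. -/
def Dominates {ℓ : ℕ} (mu lam : Fin ℓ → ℕ → ℕ) : Prop :=
  ∀ (m : Fin ℓ) (r : ℕ), domSum lam m r ≤ domSum mu m r

/-- `D` is the Young diagram of some multipartition. -/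
def IsMPDiagram {ℓ : ℕ} (D : Set (Node ℓ)) : Prop :=
  ∃ lam : Fin ℓ → ℕ → ℕ, IsMultipartition lam ∧ diagram lam = D

/-- `N` is an addable node of the diagram `D`. -/
def IsAddableFor {ℓ : ℕ} (D : Set (Node ℓ)) (N : Node ℓ) : Prop :=
  N ∉ D ∧ IsMPDiagram (insert N D)

/-- `N` is a removable node of the diagram `D`. -/
def IsRemovableFor {ℓ : ℕ} (D : Set (Node ℓ)) (N : Node ℓ) : Prop :=
  N ∈ D ∧ IsMPDiagram (D \ {N})

/-- `t` is a tableau of the diagram `D` with entries `{1, …, n}`. -/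
def IsTableau {ℓ : ℕ} (n : ℕ) (D : Set (Node ℓ)) (t : Node ℓ → ℕ) : Prop :=
  Set.BijOn t D (Set.Icc 1 n)

/-- Entries increase along rows and down columns (within `D`). -/
def RowColIncreasing {ℓ : ℕ} (D : Set (Node ℓ)) (t : Node ℓ → ℕ) : Prop :=
  (∀ N ∈ D, ((N.1, N.2.1, N.2.2 + 1) : Node ℓ) ∈ D → t N < t (N.1, N.2.1, N.2.2 + 1)) ∧
  (∀ N ∈ D, ((N.1, N.2.1 + 1, N.2.2) : Node ℓ) ∈ D → t N < t (N.1, N.2.1 + 1, N.2.2))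

/-- A standard tableau of the diagram `D` with entries `{1, …, n}`. -/
def IsStandardTableau {ℓ : ℕ} (n : ℕ) (D : Set (Node ℓ)) (t : Node ℓ → ℕ) : Prop :=
  IsTableau n D t ∧ RowColIncreasing D t

/-- The initial tableau `𝔱^λ`, filling the nodes of `[λ]` in lexicographic order. -/
noncomputable def initTab {ℓ : ℕ} (lam : Fin ℓ → ℕ → ℕ) (N : Node ℓ) : ℕ :=
  1 + Set.ncard {N' ∈ diagram lam | nodeLt N' N}

/-- The tableau `𝔱_λ^ν`: agrees with `𝔱^λ` on `[λ]` and fills `[ν] \ [λ]` with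
`n+1, n+2, …` in lexicographic order. -/
noncomputable def extTab {ℓ : ℕ} (lam nu : Fin ℓ → ℕ → ℕ) (N : Node ℓ) : ℕ :=
  haveI := Classical.propDecidable (N ∈ diagram lam)
  if N ∈ diagram lam then initTab lam N
  else (diagram lam).ncard + 1 +
    Set.ncard {N' ∈ diagram nu \ diagram lam | nodeLt N' N}

/-- The straight shape with underlying partition `f` anchored at the node `N₀`
(so that `N₀` is its top-left node when `f 0 > 0`). -/
def anchoredShape {ℓ : ℕ} (N₀ : Node ℓ) (f : ℕ → ℕ) : Set (Node ℓ) :=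
  {N | ∃ x y : ℕ, y < f x ∧ N = (N₀.1, N₀.2.1 + x, N₀.2.2 + y)}

/-- A (nonempty) straight shape: a translate of the Young diagram of a partition. -/
def IsStraightShape {ℓ : ℕ} (S : Set (Node ℓ)) : Prop :=
  ∃ (N₀ : Node ℓ) (f : ℕ → ℕ), IsPartitionFun f ∧ 0 < f 0 ∧ S = anchoredShape N₀ f

/-- Diagrams reachable from `D₀` by successively removing removable nodes. -/
inductive Reached {ℓ : ℕ} : Set (Node ℓ) → Set (Node ℓ) → Prop
  | refl (D : Set (Node ℓ)) : Reached D D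
  | step (D₀ D : Set (Node ℓ)) (N : Node ℓ) :
      Reached D₀ D → IsMPDiagram D → IsRemovableFor D N → Reached D₀ (D \ {N})

/-- `S` is a removable set of nodes of `[ν]`: `[ν] \ S` is reached from `[ν]` by
successively removing removable nodes. -/
def IsRemovableShape {ℓ : ℕ} (nu : Fin ℓ → ℕ → ℕ) (S : Set (Node ℓ)) : Prop :=
  S ⊆ diagram nu ∧ Reached (diagram nu) (diagram nu \ S)

/-- `S` is `e`-small: its residues do not exhaust `ℤ/eℤ`. -/
def ESmall {ℓ : ℕ} (e : ℕ) (κ : Fin ℓ → ZMod e) (S : Set (Node ℓ)) : Prop :=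
  ∃ i : ZMod e, ∀ N ∈ S, res e κ N ≠ i

/-- Every node of `S` precedes every node of `T`. -/
def ShapePrec {ℓ : ℕ} (S T : Set (Node ℓ)) : Prop :=
  ∀ N ∈ S, ∀ N' ∈ T, nodeLt N N'

/-- `S` is a subshape of `T`: both are straight shapes, the underlying partition of `S`
is contained in that of `T`, and the residues of their top-left nodes agree. -/
def IsSubshapeOf {ℓ : ℕ} (e : ℕ) (κ : Fin ℓ → ZMod e) (S T : Set (Node ℓ)) : Prop :=
  ∃ (N₀ N₁ : Node ℓ) (f g : ℕ → ℕ),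
    IsPartitionFun f ∧ IsPartitionFun g ∧ 0 < f 0 ∧ 0 < g 0 ∧
    S = anchoredShape N₀ f ∧ T = anchoredShape N₁ g ∧
    (∀ x : ℕ, f x ≤ g x) ∧ res e κ N₀ = res e κ N₁

/-- `σ` exchanges the two sets `X` and `Y` of natural numbers in increasing order,
fixing everything else. -/
def SwapsInOrder (σ : Equiv.Perm ℕ) (X Y : Set ℕ) : Prop :=
  (∀ k : ℕ, k ∉ X ∪ Y → σ k = k) ∧ Set.BijOn σ X Y ∧ Set.BijOn σ Y X ∧
  (∀ x ∈ X, ∀ y ∈ X, x < y → σ x < σ y) ∧ (∀ x ∈ Y, ∀ y ∈ Y, x < y → σ x < σ y)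

/-- The integer `d_N(D)` for a node `N` of a diagram `D`: the number of addable nodes of
`D` with the same residue as `N` which are greater than `N`, minus the number of removable
nodes of `D` with the same residue as `N` which are greater than `N`. -/
noncomputable def dVal {ℓ : ℕ} (e : ℕ) (κ : Fin ℓ → ZMod e) (D : Set (Node ℓ))
    (N : Node ℓ) : ℤ :=
  (Set.ncard {A : Node ℓ | IsAddableFor D A ∧ res e κ A = res e κ N ∧ nodeLt N A} : ℤ) -
  (Set.ncard {A : Node ℓ | IsRemovableFor D A ∧ res e κ A = res e κ N ∧ nodeLt N A} : ℤ)

/-- The degree of a standard tableau `t` of the diagram `D`: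
`deg t = ∑_{N ∈ D} d_N({N' ∈ D | t N' ≤ t N})`, the closed form of the recursion
`deg 𝔱 = deg 𝔱↓(n-1) + d_{𝔱⁻¹(n)}(Shape 𝔱)`. -/
noncomputable def degTab {ℓ : ℕ} (e : ℕ) (κ : Fin ℓ → ZMod e) (D : Set (Node ℓ))
    (t : Node ℓ → ℕ) : ℤ :=
  ∑ᶠ N ∈ D, dVal e κ {N' ∈ D | t N' ≤ t N} N

/-- The lexicographic order on the (component, row) pairs of nodes. -/
def rowPairLt {ℓ : ℕ} (N N' : Node ℓ) : Prop :=
  N.1 < N'.1 ∨ (N.1 = N'.1 ∧ N.2.1 < N'.2.1)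

/-- The corresponding weak order on (component, row) pairs. -/
def rowPairLe {ℓ : ℕ} (N N' : Node ℓ) : Prop :=
  rowPairLt N N' ∨ (N.1 = N'.1 ∧ N.2.1 = N'.2.1)

/-- The rank of a straight shape with underlying partition `f`: the number of nodes on
the diagonal through its top-left node. -/
noncomputable def rankOf (f : ℕ → ℕ) : ℕ :=
  Set.ncard {i : ℕ | i < f i}

/-- A removable `e`-small straight shape of `[ν]` which is a subshape of `[μ*]` and lies
strictly between `[μ*]` and `[λ*]` in the node order. -/
def MiddleShape {ℓ : ℕ} (e : ℕ) (κ : Fin ℓ → ZMod e) (nu : Fin ℓ → ℕ → ℕ)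
    (mustar lamstar S : Set (Node ℓ)) : Prop :=
  IsStraightShape S ∧ IsRemovableShape nu S ∧ ESmall e κ S ∧
    IsSubshapeOf e κ S mustar ∧ ShapePrec mustar S ∧ ShapePrec S lamstar

/-- A maximal (under inclusion) middle shape. -/
def MaximalMiddleShape {ℓ : ℕ} (e : ℕ) (κ : Fin ℓ → ZMod e) (nu : Fin ℓ → ℕ → ℕ)
    (mustar lamstar S : Set (Node ℓ)) : Prop :=
  MiddleShape e κ nu mustar lamstar S ∧
    ∀ S' : Set (Node ℓ), MiddleShape e κ nu mustar lamstar S' → S ⊆ S' → S' = S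

end CarterPayne

/-!
Write `T = 𝔱_λ^ν`. It is increasing on `[λ]` and on `[μ*] = [ν] \ [λ]`, and every `[ξʲ]`,
`j ≥ 1`, lies in `[λ]` while its copy at the top-left node of `[μ*]` lies in `[μ*]`; as
`σ_{μ*,ξʲ}` exchanges their entries in increasing order, `σ_{μ*,ξʲ} ∘ T = T ∘ sⱼ` on `[ν]`,
where `sⱼ` exchanges the two shapes by translation. So the product of the `σ`'s is `T ∘ Φ` with
`Φ = s_c ∘ ⋯ ∘ s_1`, and `Φ` preserves residues because `[ξʲ]` and its copy have top-left
nodes of equal residue.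

Follow a node of `[μ]` along the exchanges: a node of `[μ*]` ends in the first `[ξʲ]` whose copy
contains it, a node of a middle `[ξʲ]` goes to `[μ*]` and then on to a later `[ξᵏ]`, and every
other node stays put. Hence `Φ` maps `[μ]` into `[λ]`. The copies are straight shapes sharing
their top-left node, so a node enters one no later than its right or lower neighbour; together
with `[ξ¹] ≺ ⋯ ≺ [ξᶜ]` this makes `Φ` lexicographically increasing on such neighbours, and `T`
is increasing on `[λ]`. Finally `T (Φ N) = 𝔱^λ N'` forces `Φ N = N'`.
-/

namespace CarterPayne

open Set

variable {ℓ : ℕ}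

lemma nodeLt_iff (a b : Node ℓ) : nodeLt a b ↔
    ((a.1 : ℕ) < b.1 ∨ ((a.1 : ℕ) = b.1 ∧ (a.2.1 < b.2.1 ∨ (a.2.1 = b.2.1 ∧ a.2.2 < b.2.2)))) := by
  simp only [nodeLt, Fin.lt_def, Fin.ext_iff]

lemma nodeLt_irrefl (N : Node ℓ) : ¬ nodeLt N N := by
  rw [nodeLt_iff]; omega

lemma nodeLt_trans {a b c : Node ℓ} (hab : nodeLt a b) (hbc : nodeLt b c) : nodeLt a c := by
  rw [nodeLt_iff] at *; omega

lemma nodeLt_trichotomy (a b : Node ℓ) : nodeLt a b ∨ a = b ∨ nodeLt b a := by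
  obtain ⟨⟨m, hm⟩, r, c⟩ := a
  obtain ⟨⟨m', hm'⟩, r', c'⟩ := b
  simp only [nodeLt_iff, Prod.mk.injEq, Fin.mk.injEq]
  omega

def nodeToLex : Node ℓ ≃ Fin ℓ ×ₗ (ℕ ×ₗ ℕ) :=
  (Equiv.prodCongr (Equiv.refl _) toLex).trans toLex

lemma nodeToLex_lt_iff (a b : Node ℓ) : nodeToLex a < nodeToLex b ↔ nodeLt a b := by
  simp [nodeToLex, Prod.Lex.toLex_lt_toLex, nodeLt]

def IncreasingOn (t : Node ℓ → ℕ) (S : Set (Node ℓ)) : Prop :=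
  ∀ a ∈ S, ∀ b ∈ S, nodeLt a b → t a < t b

lemma IncreasingOn.congr {t t' : Node ℓ → ℕ} {S : Set (Node ℓ)} (h : IncreasingOn t S)
    (htt' : EqOn t t' S) : IncreasingOn t' S := fun a ha b hb hab => by
  rw [← htt' ha, ← htt' hb]; exact h a ha b hb hab

lemma IncreasingOn.mono {t : Node ℓ → ℕ} {S S' : Set (Node ℓ)} (h : IncreasingOn t S)
    (hS' : S' ⊆ S) : IncreasingOn t S' :=
  fun a ha b hb => h a (hS' ha) b (hS' hb)

lemma IncreasingOn.injOn {t : Node ℓ → ℕ} {S : Set (Node ℓ)} (h : IncreasingOn t S) :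
    InjOn t S := by
  intro a ha b hb hab
  rcases nodeLt_trichotomy a b with hlt | heq | hlt
  · exact absurd hab (h a ha b hb hlt).ne
  · exact heq
  · exact absurd hab (h b hb a ha hlt).ne'

/-- Holds because the lexicographic order on nodes is a well-order. -/
lemma IncreasingOn.eqOn_of_image_eq {f g : Node ℓ → ℕ} {S : Set (Node ℓ)}
    (hf : IncreasingOn f S) (hg : IncreasingOn g S) (h : f '' S = g '' S) : EqOn f g S := by
  let β := {p : Fin ℓ ×ₗ (ℕ ×ₗ ℕ) // nodeToLex.symm p ∈ S}
  have hmono : ∀ {t}, IncreasingOn t S → StrictMono fun p : β => t (nodeToLex.symm p.1) :=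
    fun ht p q hpq => ht _ p.2 _ q.2 (by rwa [← nodeToLex_lt_iff, Equiv.apply_symm_apply,
      Equiv.apply_symm_apply])
  have hrange : ∀ t : Node ℓ → ℕ, range (fun p : β => t (nodeToLex.symm p.1)) = t '' S := by
    intro t
    ext k
    constructor
    · rintro ⟨p, rfl⟩
      exact ⟨_, p.2, rfl⟩
    · rintro ⟨N, hN, rfl⟩
      exact ⟨⟨nodeToLex N, by simpa using hN⟩, by simp⟩
  have hfg := ((hmono hf).range_inj (hmono hg)).1 (by rw [hrange, hrange, h])
  intro N hN
  simpa using congrFun hfg ⟨nodeToLex N, by simpa using hN⟩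

lemma bijOn_of_ncard_le {α β : Type*} {f : α → β} {s : Set α} {t : Set β} (hmaps : MapsTo f s t)
    (hinj : InjOn f s) (hcard : t.ncard ≤ s.ncard) (ht : t.Finite) : BijOn f s t := by
  refine ⟨hmaps, hinj, ?_⟩
  rw [SurjOn, eq_of_subset_of_ncard_le hmaps.image_subset
    (by rwa [hinj.ncard_image]) ht]

noncomputable def rankIn (S : Set (Node ℓ)) (N : Node ℓ) : ℕ :=
  1 + {N' ∈ S | nodeLt N' N}.ncard

lemma increasingOn_rankIn {S : Set (Node ℓ)} (hS : S.Finite) : IncreasingOn (rankIn S) S := by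
  intro a ha b _ hab
  have hsub : {N' ∈ S | nodeLt N' a} ⊂ {N' ∈ S | nodeLt N' b} :=
    ⟨fun x hx => ⟨hx.1, nodeLt_trans hx.2 hab⟩, fun h => nodeLt_irrefl a (h ⟨ha, hab⟩).2⟩
  have := ncard_lt_ncard hsub (hS.subset fun x hx => hx.1)
  simp only [rankIn]
  omega

lemma bijOn_rankIn {S : Set (Node ℓ)} (hS : S.Finite) :
    BijOn (rankIn S) S (Icc 1 S.ncard) := by
  refine bijOn_of_ncard_le (fun a ha => ?_) (increasingOn_rankIn hS).injOn (by simp)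
    (finite_Icc _ _)
  have hsub : {N' ∈ S | nodeLt N' a} ⊆ S \ {a} :=
    fun x hx => ⟨hx.1, fun hxa => nodeLt_irrefl a (hxa ▸ hx.2)⟩
  have hle := ncard_le_ncard hsub hS.sdiff
  have hpos : 0 < S.ncard := (ncard_pos hS).2 ⟨a, ha⟩
  rw [ncard_sdiff_singleton_of_mem ha] at hle
  simp only [rankIn, mem_Icc]
  omega

section Tableaux

variable {lam nu : Fin ℓ → ℕ → ℕ} {N : Node ℓ}

lemma diagram_finite (h : IsMultipartition lam) :
    (diagram lam).Finite := by
  choose B hB using fun m => (h m).2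
  refine ((finite_univ (α := Fin ℓ)).prod ((finite_Iio (Finset.univ.sup B)).prod
    (finite_Iio (Finset.univ.sup fun m => lam m 0)))).subset ?_
  rintro ⟨m, r, c⟩ (hc : c < lam m r)
  have hr : r < Finset.univ.sup B := by
    by_contra hr
    have := hB m r ((Finset.le_sup (Finset.mem_univ m)).trans (not_lt.1 hr))
    omega
  have hc0 : lam m r ≤ lam m 0 := (h m).1 0 r r.zero_le
  have hsup : lam m 0 ≤ Finset.univ.sup fun m => lam m 0 :=
    Finset.le_sup (f := fun m => lam m 0) (Finset.mem_univ m)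
  exact ⟨mem_univ m, hr, show c < _ by omega⟩

lemma extTab_of_mem (h : N ∈ diagram lam) : extTab lam nu N = rankIn (diagram lam) N := by
  simp [extTab, h, rankIn, initTab]

lemma extTab_of_notMem (h : N ∉ diagram lam) :
    extTab lam nu N = (diagram lam).ncard + rankIn (diagram nu \ diagram lam) N := by
  simp only [extTab, h, if_false, rankIn]
  omega

lemma bijOn_extTab (hlam : (diagram lam).Finite) :
    BijOn (extTab lam nu) (diagram lam) (Icc 1 (diagram lam).ncard) :=
  (bijOn_rankIn hlam).congr fun _ h => (extTab_of_mem h).symm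

lemma increasingOn_extTab (hlam : (diagram lam).Finite) :
    IncreasingOn (extTab lam nu) (diagram lam) :=
  (increasingOn_rankIn hlam).congr fun _ h => (extTab_of_mem h).symm

lemma increasingOn_extTab_diff (hnu : (diagram nu).Finite) :
    IncreasingOn (extTab lam nu) (diagram nu \ diagram lam) := by
  intro a ha b hb hab
  rw [extTab_of_notMem ha.2, extTab_of_notMem hb.2]
  exact Nat.add_lt_add_left (increasingOn_rankIn hnu.sdiff _ ha _ hb hab) _

lemma injOn_extTab (hlam : (diagram lam).Finite) (hnu : (diagram nu).Finite) :
    InjOn (extTab lam nu) (diagram nu) := by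
  have hlow : ∀ {N}, N ∈ diagram lam → extTab lam nu N ≤ (diagram lam).ncard :=
    fun h => ((bijOn_extTab hlam).mapsTo h).2
  have hhigh : ∀ {N}, N ∉ diagram lam → (diagram lam).ncard < extTab lam nu N := by
    intro N h
    rw [extTab_of_notMem h, rankIn]
    omega
  intro a ha b hb hab
  by_cases haL : a ∈ diagram lam <;> by_cases hbL : b ∈ diagram lam
  · exact (bijOn_extTab hlam).injOn haL hbL hab
  · exact absurd hab (hlow haL |>.trans_lt (hhigh hbL)).ne
  · exact absurd hab (hlow hbL |>.trans_lt (hhigh haL)).ne'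
  · exact (increasingOn_extTab_diff hnu).injOn ⟨ha, haL⟩ ⟨hb, hbL⟩ hab

end Tableaux

section Shapes

variable {A B N N' : Node ℓ} {f g : ℕ → ℕ}

lemma mem_anchoredShape : N ∈ anchoredShape A f ↔
    N.1 = A.1 ∧ A.2.1 ≤ N.2.1 ∧ A.2.2 ≤ N.2.2 ∧ N.2.2 - A.2.2 < f (N.2.1 - A.2.1) := by
  obtain ⟨m, r, c⟩ := N
  constructor
  · rintro ⟨x, y, hy, h⟩
    simp only [Prod.mk.injEq] at h
    obtain ⟨rfl, rfl, rfl⟩ := h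
    simpa using hy
  · rintro ⟨rfl, hr, hc, h⟩
    dsimp only at hr hc h
    refine ⟨r - A.2.1, c - A.2.2, h, ?_⟩
    simp only [Prod.mk.injEq, true_and]
    omega

lemma offset_mem_anchoredShape_iff {x y : ℕ} :
    ((A.1, A.2.1 + x, A.2.2 + y) : Node ℓ) ∈ anchoredShape A f ↔ y < f x := by
  simp [mem_anchoredShape]

lemma anchor_mem_anchoredShape (hf0 : 0 < f 0) : A ∈ anchoredShape A f :=
  mem_anchoredShape.2 ⟨rfl, le_rfl, le_rfl, by simpa using hf0⟩

lemma anchoredShape_mono (h : ∀ x, f x ≤ g x) : anchoredShape A f ⊆ anchoredShape A g :=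
  fun _ ⟨x, y, hy, hN⟩ => ⟨x, y, hy.trans_le (h x), hN⟩

lemma anchoredShape_inj (hf0 : 0 < f 0) (hg0 : 0 < g 0)
    (h : anchoredShape A f = anchoredShape B g) : A = B ∧ f = g := by
  have hA := mem_anchoredShape.1 (h ▸ anchor_mem_anchoredShape hf0 : A ∈ anchoredShape B g)
  have hB := mem_anchoredShape.1 (h ▸ anchor_mem_anchoredShape hg0 : B ∈ anchoredShape A f)
  obtain rfl : A = B :=
    Prod.ext hA.1 (Prod.ext (hB.2.1.antisymm hA.2.1) (hB.2.2.1.antisymm hA.2.2.1))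
  have hle : ∀ {f' g' : ℕ → ℕ}, anchoredShape A f' = anchoredShape A g' → ∀ x, f' x ≤ g' x := by
    intro f' g' hfg x
    by_contra! hlt
    have := (offset_mem_anchoredShape_iff (y := g' x)).1
      (hfg ▸ offset_mem_anchoredShape_iff.2 hlt : _ ∈ anchoredShape A g')
    omega
  exact ⟨rfl, funext fun x => (hle h x).antisymm (hle h.symm x)⟩

lemma ShapePrec.disjoint {S T : Set (Node ℓ)} (h : ShapePrec S T) : Disjoint S T :=
  disjoint_left.2 fun N hS hT => nodeLt_irrefl N (h N hS N hT)

/-- Meaningful only on nodes weakly right of and below `A` (truncated subtraction). -/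
def translate (A B N : Node ℓ) : Node ℓ :=
  (B.1, B.2.1 + (N.2.1 - A.2.1), B.2.2 + (N.2.2 - A.2.2))

lemma translate_offset (x y : ℕ) :
    translate A B ((A.1, A.2.1 + x, A.2.2 + y) : Node ℓ) = (B.1, B.2.1 + x, B.2.2 + y) := by
  simp [translate]

lemma translate_mem (h : N ∈ anchoredShape A f) : translate A B N ∈ anchoredShape B f := by
  obtain ⟨x, y, hy, rfl⟩ := h
  rw [translate_offset]
  exact ⟨x, y, hy, rfl⟩

lemma image_translate_anchoredShape : translate A B '' anchoredShape A f = anchoredShape B f := by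
  refine Subset.antisymm (image_subset_iff.2 fun _ => translate_mem) ?_
  rintro _ ⟨x, y, hy, rfl⟩
  exact ⟨_, ⟨x, y, hy, rfl⟩, translate_offset x y⟩

lemma nodeLt_translate (hN : N ∈ anchoredShape A f) (hN' : N' ∈ anchoredShape A g)
    (h : nodeLt N N') : nodeLt (translate A B N) (translate A B N') := by
  obtain ⟨x, y, -, rfl⟩ := hN
  obtain ⟨x', y', -, rfl⟩ := hN'
  rw [translate_offset, translate_offset, nodeLt_iff] at *
  dsimp only at *
  omega

lemma res_translate {e : ℕ} {κ : Fin ℓ → ZMod e} (h : N ∈ anchoredShape A f) :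
    res e κ (translate A B N) = res e κ N + res e κ B - res e κ A := by
  obtain ⟨x, y, -, rfl⟩ := h
  rw [translate_offset]
  simp only [res]
  push_cast
  ring

def RightOrBelow (N N' : Node ℓ) : Prop :=
  N' = (N.1, N.2.1, N.2.2 + 1) ∨ N' = (N.1, N.2.1 + 1, N.2.2)

lemma RightOrBelow.nodeLt (h : RightOrBelow N N') : nodeLt N N' := by
  rcases h with rfl | rfl <;> (rw [nodeLt_iff]; dsimp only; omega)

lemma RightOrBelow.translate (h : RightOrBelow N N') (hN : N ∈ anchoredShape A f) :
    RightOrBelow (translate A B N) (translate A B N') := by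
  obtain ⟨x, y, -, rfl⟩ := hN
  rcases h with rfl | rfl
  · left
    simp only [CarterPayne.translate, add_tsub_cancel_left, Prod.mk.injEq, true_and]
    omega
  · right
    simp only [CarterPayne.translate, add_tsub_cancel_left, Prod.mk.injEq, true_and, and_true]
    omega

lemma RightOrBelow.mem_anchoredShape (h : RightOrBelow N N') (hN : N ∈ anchoredShape A f)
    (hg : IsPartitionFun g) (hN' : N' ∈ anchoredShape A g) : N ∈ anchoredShape A g := by
  obtain ⟨x, y, -, rfl⟩ := hN
  rw [offset_mem_anchoredShape_iff]
  rcases h with rfl | rfl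
  · rw [add_assoc, offset_mem_anchoredShape_iff] at hN'
    omega
  · rw [add_assoc, offset_mem_anchoredShape_iff] at hN'
    exact hN'.trans_le (hg.1 _ _ x.le_succ)

lemma IsMPDiagram.mem_of_rightOrBelow {D : Set (Node ℓ)} (hD : IsMPDiagram D)
    (h : RightOrBelow N N') (hN' : N' ∈ D) : N ∈ D := by
  obtain ⟨lam, hlam, rfl⟩ := hD
  rcases h with rfl | rfl
  · exact (Nat.lt_succ_self _).trans hN'
  · exact hN'.trans_le ((hlam N.1).1 _ _ N.2.1.le_succ)

lemma RightOrBelow.mem_of_isMPDiagram_diff {D S : Set (Node ℓ)} (hD : IsMPDiagram (D \ S))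
    (h : RightOrBelow N N') (hN : N ∈ S) (hN' : N' ∈ D) : N' ∈ S := by
  by_contra hN'S
  exact (hD.mem_of_rightOrBelow h ⟨hN', hN'S⟩).2 hN

end Shapes

section Exchange

variable {A B N P P' : Node ℓ} {f F : ℕ → ℕ}

open Classical in
/-- The node-level counterpart of `σ_{μ*,ξ}`, for `ξ = anchoredShape A f` and `μ*` anchored
at `B`. -/
noncomputable def shapeSwap (A B : Node ℓ) (f : ℕ → ℕ) (N : Node ℓ) : Node ℓ :=
  if N ∈ anchoredShape A f then translate A B N
  else if N ∈ anchoredShape B f then translate B A N else N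

lemma shapeSwap_of_mem_left (h : N ∈ anchoredShape A f) : shapeSwap A B f N = translate A B N :=
  if_pos h

lemma shapeSwap_of_mem_right (hA : N ∉ anchoredShape A f) (hB : N ∈ anchoredShape B f) :
    shapeSwap A B f N = translate B A N := by
  rw [shapeSwap, if_neg hA, if_pos hB]

lemma shapeSwap_of_notMem (hA : N ∉ anchoredShape A f) (hB : N ∉ anchoredShape B f) :
    shapeSwap A B f N = N := by
  rw [shapeSwap, if_neg hA, if_neg hB]

lemma mapsTo_shapeSwap {W : Set (Node ℓ)} (hA : anchoredShape A f ⊆ W)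
    (hB : anchoredShape B f ⊆ W) : MapsTo (shapeSwap A B f) W W := by
  intro N hN
  by_cases hNA : N ∈ anchoredShape A f
  · rw [shapeSwap_of_mem_left hNA]
    exact hB (translate_mem hNA)
  by_cases hNB : N ∈ anchoredShape B f
  · rw [shapeSwap_of_mem_right hNA hNB]
    exact hA (translate_mem hNB)
  rwa [shapeSwap_of_notMem hNA hNB]

lemma res_shapeSwap {e : ℕ} {κ : Fin ℓ → ZMod e} (hAB : res e κ A = res e κ B) (N : Node ℓ) :
    res e κ (shapeSwap A B f N) = res e κ N := by
  by_cases hNA : N ∈ anchoredShape A f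
  · rw [shapeSwap_of_mem_left hNA, res_translate hNA, hAB]
    ring
  by_cases hNB : N ∈ anchoredShape B f
  · rw [shapeSwap_of_mem_right hNA hNB, res_translate hNB, hAB]
    ring
  rw [shapeSwap_of_notMem hNA hNB]

lemma SwapsInOrder.symm {σ : Equiv.Perm ℕ} {X Y : Set ℕ} (h : SwapsInOrder σ X Y) :
    SwapsInOrder σ Y X :=
  ⟨fun k hk => h.1 k (by rwa [union_comm]), h.2.2.1, h.2.1, h.2.2.2.2, h.2.2.2.1⟩

/-- On the shape at `A`, both sides are increasing maps onto `T` of the shape at `B`. -/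
lemma SwapsInOrder.apply_eq_translate {σ : Equiv.Perm ℕ} {T : Node ℓ → ℕ}
    (hσ : SwapsInOrder σ (T '' anchoredShape A f) (T '' anchoredShape B f))
    (hTA : IncreasingOn T (anchoredShape A f)) (hTB : IncreasingOn T (anchoredShape B f))
    (hN : N ∈ anchoredShape A f) :
    σ (T N) = T (translate A B N) := by
  refine IncreasingOn.eqOn_of_image_eq (f := fun N => σ (T N)) (g := fun N => T (translate A B N))
    (fun a ha b hb hab => hσ.2.2.2.1 _ ⟨a, ha, rfl⟩ _ ⟨b, hb, rfl⟩ (hTA a ha b hb hab))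
    (fun a ha b hb hab =>
      hTB _ (translate_mem ha) _ (translate_mem hb) (nodeLt_translate ha hb hab))
    ?_ hN
  rw [← image_image, hσ.2.1.image_eq, ← image_image T (translate A B),
    image_translate_anchoredShape]

lemma SwapsInOrder.apply_eq_shapeSwap {σ : Equiv.Perm ℕ} {T : Node ℓ → ℕ} {W : Set (Node ℓ)}
    (hσ : SwapsInOrder σ (T '' anchoredShape A f) (T '' anchoredShape B f))
    (hTA : IncreasingOn T (anchoredShape A f)) (hTB : IncreasingOn T (anchoredShape B f))
    (hT : InjOn T W)
    (hAW : anchoredShape A f ⊆ W) (hBW : anchoredShape B f ⊆ W) (hN : N ∈ W) :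
    σ (T N) = T (shapeSwap A B f N) := by
  by_cases hNA : N ∈ anchoredShape A f
  · rw [shapeSwap_of_mem_left hNA]
    exact hσ.apply_eq_translate hTA hTB hNA
  by_cases hNB : N ∈ anchoredShape B f
  · rw [shapeSwap_of_mem_right hNA hNB]
    exact hσ.symm.apply_eq_translate hTB hTA hNB
  rw [shapeSwap_of_notMem hNA hNB]
  refine hσ.1 _ ?_
  rintro (⟨M, hM, hMN⟩ | ⟨M, hM, hMN⟩)
  · exact hNA (hT (hAW hM) hN hMN ▸ hM)
  · exact hNB (hT (hBW hM) hN hMN ▸ hM)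

noncomputable def exchangeAlong (B : Node ℓ) : List (Node ℓ × (ℕ → ℕ)) → Node ℓ → Node ℓ
  | [], N => N
  | x :: l, N => exchangeAlong B l (shapeSwap x.1 B x.2 N)

lemma exchangeAlong_append (l₁ l₂ : List (Node ℓ × (ℕ → ℕ))) (N : Node ℓ) :
    exchangeAlong B (l₁ ++ l₂) N = exchangeAlong B l₂ (exchangeAlong B l₁ N) := by
  induction l₁ generalizing N with
  | nil => rfl
  | cons x l₁ ih => exact ih _

lemma exchangeAlong_eq_self {l : List (Node ℓ × (ℕ → ℕ))}
    (h : ∀ x ∈ l, N ∉ anchoredShape x.1 x.2 ∧ N ∉ anchoredShape B x.2) :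
    exchangeAlong B l N = N := by
  induction l with
  | nil => rfl
  | cons x l ih =>
    obtain ⟨hA, hB⟩ := h x List.mem_cons_self
    rw [exchangeAlong, shapeSwap_of_notMem hA hB]
    exact ih fun y hy => h y (List.mem_cons_of_mem x hy)

lemma res_exchangeAlong {e : ℕ} {κ : Fin ℓ → ZMod e} {l : List (Node ℓ × (ℕ → ℕ))}
    (h : ∀ x ∈ l, res e κ x.1 = res e κ B) (N : Node ℓ) :
    res e κ (exchangeAlong B l N) = res e κ N := by
  induction l generalizing N with
  | nil => rfl
  | cons x l ih =>
    rw [exchangeAlong, ih (fun y hy => h y (List.mem_cons_of_mem x hy)),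
      res_shapeSwap (h x List.mem_cons_self)]

lemma ofFn_reverse_prod_apply {c : ℕ} {σ : Fin c → Equiv.Perm ℕ}
    {x : Fin c → Node ℓ × (ℕ → ℕ)} {T : Node ℓ → ℕ} {W : Set (Node ℓ)}
    (hW : ∀ k, MapsTo (shapeSwap (x k).1 B (x k).2) W W)
    (hσ : ∀ k, ∀ N ∈ W, σ k (T N) = T (shapeSwap (x k).1 B (x k).2 N)) (hN : N ∈ W) :
    (List.ofFn σ).reverse.prod (T N) = T (exchangeAlong B (List.ofFn x) N) := by
  induction c generalizing N with
  | zero => rfl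
  | succ c ih =>
    rw [List.ofFn_succ, List.ofFn_succ, List.reverse_cons, List.prod_append, List.prod_singleton,
      Equiv.Perm.mul_apply, hσ 0 N hN, exchangeAlong]
    exact ih (fun k => hW k.succ) (fun k => hσ k.succ) (hW 0 hN)

end Exchange

/-- A pair `(A, f)` of `l` stands for the shape `anchoredShape A f`, whose copy is
`anchoredShape B f`, at the top-left node of `[μ*] = anchoredShape B F`. -/
structure IsExchangeChain (B : Node ℓ) (F : ℕ → ℕ) (l : List (Node ℓ × (ℕ → ℕ))) : Prop where
  isPartitionFun : ∀ x ∈ l, IsPartitionFun x.2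
  le : ∀ x ∈ l, ∀ i, x.2 i ≤ F i
  shapePrec : ∀ x ∈ l, ShapePrec (anchoredShape B F) (anchoredShape x.1 x.2)
  pairwise : l.Pairwise fun x y => ShapePrec (anchoredShape x.1 x.2) (anchoredShape y.1 y.2)

lemma exists_copy_mem_of_mem_last {B A' P : Node ℓ} {F : ℕ → ℕ} {l : List (Node ℓ × (ℕ → ℕ))}
    (hP : P ∈ anchoredShape B F) : ∃ y ∈ l ++ [(A', F)], P ∈ anchoredShape B y.2 :=
  ⟨(A', F), by simp, hP⟩

namespace IsExchangeChain

variable {B A' N P P' : Node ℓ} {F : ℕ → ℕ} {x y : Node ℓ × (ℕ → ℕ)}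
  {l l' : List (Node ℓ × (ℕ → ℕ))}

lemma sublist (h : IsExchangeChain B F l) (hl : l'.Sublist l) : IsExchangeChain B F l' :=
  ⟨fun x hx => h.1 x (hl.subset hx), fun x hx => h.2 x (hl.subset hx),
    fun x hx => h.3 x (hl.subset hx), h.4.sublist hl⟩

lemma copy_subset (h : IsExchangeChain B F l) (hx : x ∈ l) :
    anchoredShape B x.2 ⊆ anchoredShape B F :=
  anchoredShape_mono (h.le x hx)

lemma notMem_copy (h : IsExchangeChain B F l) (hx : x ∈ l) (hy : y ∈ l)
    (hN : N ∈ anchoredShape x.1 x.2) : N ∉ anchoredShape B y.2 :=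
  fun hC => disjoint_left.1 (h.shapePrec x hx).disjoint (h.copy_subset hy hC) hN

lemma subset_diff {D : Set (Node ℓ)} (h : IsExchangeChain B F l) (hx : x ∈ l)
    (hD : anchoredShape x.1 x.2 ⊆ D) : anchoredShape x.1 x.2 ⊆ D \ anchoredShape B F :=
  fun _ hN => ⟨hD hN, disjoint_right.1 (h.shapePrec x hx).disjoint hN⟩

lemma exchangeAlong_eq_self_of_mem (h : IsExchangeChain B F (x :: l))
    (hN : N ∈ anchoredShape x.1 x.2) : exchangeAlong B l N = N :=
  exchangeAlong_eq_self fun _ hy =>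
    ⟨disjoint_left.1 (List.rel_of_pairwise_cons h.pairwise hy).disjoint hN,
      h.notMem_copy List.mem_cons_self (List.mem_cons_of_mem x hy) hN⟩

lemma exchangeAlong_cons_of_mem (h : IsExchangeChain B F (x :: l))
    (hP : P ∈ anchoredShape B F) (hPx : P ∈ anchoredShape B x.2) :
    exchangeAlong B (x :: l) P = translate B x.1 P := by
  rw [exchangeAlong, shapeSwap_of_mem_right
    (disjoint_left.1 (h.shapePrec x List.mem_cons_self).disjoint hP) hPx]
  exact h.exchangeAlong_eq_self_of_mem (translate_mem hPx)

lemma exchangeAlong_cons_of_notMem (h : IsExchangeChain B F (x :: l))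
    (hP : P ∈ anchoredShape B F) (hPx : P ∉ anchoredShape B x.2) :
    exchangeAlong B (x :: l) P = exchangeAlong B l P := by
  rw [exchangeAlong, shapeSwap_of_notMem
    (disjoint_left.1 (h.shapePrec x List.mem_cons_self).disjoint hP) hPx]

/-- A node of `[μ*]` travels to the first shape of the chain whose copy contains it. -/
lemma exists_exchangeAlong_mem (h : IsExchangeChain B F l) (hP : P ∈ anchoredShape B F)
    (hl : ∃ x ∈ l, P ∈ anchoredShape B x.2) :
    ∃ y ∈ l, exchangeAlong B l P ∈ anchoredShape y.1 y.2 := by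
  induction l with
  | nil => simp at hl
  | cons x l ih =>
    by_cases hPx : P ∈ anchoredShape B x.2
    · rw [h.exchangeAlong_cons_of_mem hP hPx]
      exact ⟨x, List.mem_cons_self, translate_mem hPx⟩
    · rw [h.exchangeAlong_cons_of_notMem hP hPx]
      obtain ⟨y, hy, hPy⟩ := ih (h.sublist (List.sublist_cons_self x l))
        ((List.or_exists_of_exists_mem_cons hl).resolve_left hPx)
      exact ⟨y, List.mem_cons_of_mem x hy, hPy⟩

/-- Copies are straight shapes anchored at `B`, so a node enters no later than its right or
lower neighbour; then either both land in the same shape, or the earlier one lands earlier. -/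
lemma exchangeAlong_lt (h : IsExchangeChain B F l) (hP : P ∈ anchoredShape B F)
    (hP' : P' ∈ anchoredShape B F) (hPP' : RightOrBelow P P')
    (hl : ∃ x ∈ l, P' ∈ anchoredShape B x.2) :
    nodeLt (exchangeAlong B l P) (exchangeAlong B l P') := by
  induction l with
  | nil => simp at hl
  | cons x l ih =>
    have htail := h.sublist (List.sublist_cons_self x l)
    by_cases hP'x : P' ∈ anchoredShape B x.2
    · have hPx := hPP'.mem_anchoredShape hP (h.isPartitionFun x List.mem_cons_self) hP'x
      rw [h.exchangeAlong_cons_of_mem hP hPx, h.exchangeAlong_cons_of_mem hP' hP'x]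
      exact nodeLt_translate hPx hP'x hPP'.nodeLt
    have hl' := (List.or_exists_of_exists_mem_cons hl).resolve_left hP'x
    rw [h.exchangeAlong_cons_of_notMem hP' hP'x]
    by_cases hPx : P ∈ anchoredShape B x.2
    · rw [h.exchangeAlong_cons_of_mem hP hPx]
      obtain ⟨y, hy, hP'y⟩ := htail.exists_exchangeAlong_mem hP' hl'
      exact List.rel_of_pairwise_cons h.pairwise hy _ (translate_mem hPx) _ hP'y
    · rw [h.exchangeAlong_cons_of_notMem hP hPx]
      exact ih htail hl'

lemma exists_suffix (h : IsExchangeChain B F (l ++ [(A', F)])) (hx : x ∈ l) :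
    ∃ l₂, IsExchangeChain B F (l₂ ++ [(A', F)]) ∧
      (∀ y ∈ l₂ ++ [(A', F)], y ∈ l ++ [(A', F)] ∧
        ShapePrec (anchoredShape x.1 x.2) (anchoredShape y.1 y.2)) ∧
      ∀ N ∈ anchoredShape x.1 x.2,
        exchangeAlong B (l ++ [(A', F)]) N =
          exchangeAlong B (l₂ ++ [(A', F)]) (translate x.1 B N) := by
  obtain ⟨l₁, l₂, rfl⟩ := List.append_of_mem hx
  have h' : IsExchangeChain B F (l₁ ++ x :: (l₂ ++ [(A', F)])) := by simpa using h
  have hpw := List.pairwise_append.1 h'.pairwise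
  refine ⟨l₂, h'.sublist ((List.sublist_cons_self x _).trans (List.sublist_append_right l₁ _)),
    fun y hy => ?_, fun N hN => ?_⟩
  · exact ⟨by simp_all, List.rel_of_pairwise_cons hpw.2.1 hy⟩
  · have hfix : exchangeAlong B l₁ N = N := exchangeAlong_eq_self fun y hy =>
      ⟨disjoint_right.1 (hpw.2.2 y hy x List.mem_cons_self).disjoint hN,
        h'.notMem_copy (by simp) (by simp [hy]) hN⟩
    rw [List.append_assoc, List.cons_append, exchangeAlong_append l₁, hfix, exchangeAlong,
      shapeSwap_of_mem_left hN]

lemma exchangeAlong_trichotomy (h : IsExchangeChain B F (l ++ [(A', F)]))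
    (hN : N ∉ anchoredShape A' F) :
    (N ∈ anchoredShape B F ∧ ∃ y ∈ l ++ [(A', F)],
        exchangeAlong B (l ++ [(A', F)]) N ∈ anchoredShape y.1 y.2) ∨
    (∃ x ∈ l, N ∈ anchoredShape x.1 x.2 ∧ ∃ y ∈ l ++ [(A', F)],
        ShapePrec (anchoredShape x.1 x.2) (anchoredShape y.1 y.2) ∧
        exchangeAlong B (l ++ [(A', F)]) N ∈ anchoredShape y.1 y.2) ∨
    (N ∉ anchoredShape B F ∧ exchangeAlong B (l ++ [(A', F)]) N = N) := by
  by_cases hM : N ∈ anchoredShape B F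
  · exact Or.inl ⟨hM, h.exists_exchangeAlong_mem hM (exists_copy_mem_of_mem_last hM)⟩
  by_cases hX : ∃ x ∈ l, N ∈ anchoredShape x.1 x.2
  · obtain ⟨x, hx, hNx⟩ := hX
    obtain ⟨l₂, h₂, hsuf, heq⟩ := h.exists_suffix hx
    have hC := h.copy_subset (List.mem_append_left _ hx) (translate_mem (B := B) hNx)
    obtain ⟨y, hy, hNy⟩ := h₂.exists_exchangeAlong_mem hC (exists_copy_mem_of_mem_last hC)
    exact Or.inr (Or.inl ⟨x, hx, hNx, y, (hsuf y hy).1, (hsuf y hy).2, heq N hNx ▸ hNy⟩)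
  push Not at hX
  refine Or.inr (Or.inr ⟨hM, exchangeAlong_eq_self fun y hy =>
    ⟨?_, fun hC => hM (h.copy_subset hy hC)⟩⟩)
  rcases List.mem_append.1 hy with hy | hy
  · exact hX y hy
  · rwa [List.mem_singleton.1 hy]

lemma mapsTo_exchangeAlong {D : Set (Node ℓ)} (h : IsExchangeChain B F (l ++ [(A', F)]))
    (hD : ∀ x ∈ l ++ [(A', F)], anchoredShape x.1 x.2 ⊆ D) :
    MapsTo (exchangeAlong B (l ++ [(A', F)])) (D \ anchoredShape A' F)
      (D \ anchoredShape B F) := by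
  rintro N ⟨hND, hNL⟩
  rcases h.exchangeAlong_trichotomy hNL with
    ⟨-, y, hy, hNy⟩ | ⟨-, -, -, y, hy, -, hNy⟩ | ⟨hM, hfix⟩
  · exact h.subset_diff hy (hD y hy) hNy
  · exact h.subset_diff hy (hD y hy) hNy
  · rw [hfix]
    exact ⟨hND, hM⟩

lemma exchangeAlong_lt_of_rightOrBelow {D : Set (Node ℓ)}
    (h : IsExchangeChain B F (l ++ [(A', F)])) (hM : IsMPDiagram (D \ anchoredShape B F))
    (hX : ∀ x ∈ l, IsMPDiagram (D \ anchoredShape x.1 x.2)) (hN : N ∉ anchoredShape A' F)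
    (hN' : N' ∈ D \ anchoredShape A' F) (hNN' : RightOrBelow N N') :
    nodeLt (exchangeAlong B (l ++ [(A', F)]) N) (exchangeAlong B (l ++ [(A', F)]) N') := by
  rcases h.exchangeAlong_trichotomy hN with ⟨hNM, -⟩ | ⟨x, hx, hNx, -⟩ | ⟨-, hfix⟩
  · have hN'M := hNN'.mem_of_isMPDiagram_diff hM hNM hN'.1
    exact h.exchangeAlong_lt hNM hN'M hNN' (exists_copy_mem_of_mem_last hN'M)
  · have hN'x := hNN'.mem_of_isMPDiagram_diff (hX x hx) hNx hN'.1
    obtain ⟨l₂, h₂, -, heq⟩ := h.exists_suffix hx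
    have hC := h.copy_subset (List.mem_append_left _ hx)
    rw [heq N hNx, heq N' hN'x]
    exact h₂.exchangeAlong_lt (hC (translate_mem hNx)) (hC (translate_mem hN'x))
      (hNN'.translate hNx) (exists_copy_mem_of_mem_last (hC (translate_mem hN'x)))
  · rw [hfix]
    rcases h.exchangeAlong_trichotomy hN'.2 with
      ⟨hN'M, y, hy, hN'y⟩ | ⟨x, -, hN'x, y, -, hxy, hN'y⟩ | ⟨-, hfix'⟩
    · exact nodeLt_trans hNN'.nodeLt (h.shapePrec y hy _ hN'M _ hN'y)
    · exact nodeLt_trans hNN'.nodeLt (hxy _ hN'x _ hN'y)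
    · rw [hfix']
      exact hNN'.nodeLt

end IsExchangeChain

lemma isStandardTableau_of_eqOn_comp {Dlam Dmu : Set (Node ℓ)} {n : ℕ} {τ t : Node ℓ → ℕ}
    {Φ : Node ℓ → Node ℓ} (ht : BijOn t Dlam (Icc 1 n)) (ht' : IncreasingOn t Dlam)
    (hΦ : MapsTo Φ Dmu Dlam)
    (hΦlt : ∀ N ∈ Dmu, ∀ N' ∈ Dmu, RightOrBelow N N' → nodeLt (Φ N) (Φ N'))
    (hτ : EqOn τ (t ∘ Φ) Dmu) (hτinj : InjOn τ Dmu) (hcard : Dmu.ncard = n) :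
    IsStandardTableau n Dmu τ := by
  have hlt : ∀ N ∈ Dmu, ∀ N' ∈ Dmu, RightOrBelow N N' → τ N < τ N' := fun N hN N' hN' h => by
    rw [hτ hN, hτ hN']
    exact ht' _ (hΦ hN) _ (hΦ hN') (hΦlt N hN N' hN' h)
  refine ⟨bijOn_of_ncard_le (fun N hN => hτ hN ▸ ht.mapsTo (hΦ hN)) hτinj (by simp [hcard])
    (finite_Icc _ _), fun N hN hN' => hlt N hN _ hN' (Or.inl rfl),
    fun N hN hN' => hlt N hN _ hN' (Or.inr rfl)⟩

lemma Reached.isMPDiagram {D₀ D : Set (Node ℓ)} (hD₀ : IsMPDiagram D₀) (h : Reached D₀ D) :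
    IsMPDiagram D := by
  cases h with
  | refl => exact hD₀
  | step _ _ _ _ hN => exact hN.2

lemma MiddleShape.removable_subshape {e : ℕ} {κ : Fin ℓ → ZMod e} {nu : Fin ℓ → ℕ → ℕ}
    {L : Set (Node ℓ)} {A B : Node ℓ} {f F : ℕ → ℕ} (hnu : IsMultipartition nu)
    (hf0 : 0 < f 0) (hF0 : 0 < F 0)
    (h : MiddleShape e κ nu (anchoredShape B F) L (anchoredShape A f)) :
    anchoredShape A f ⊆ diagram nu ∧ IsMPDiagram (diagram nu \ anchoredShape A f) ∧
      (∀ i, f i ≤ F i) ∧ res e κ A = res e κ B := by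
  obtain ⟨-, ⟨hsub, hreach⟩, -, ⟨N₀, N₁, f', g', -, -, hf'0, hg'0, hS, hT, hle, hres⟩, -, -⟩ := h
  obtain ⟨rfl, rfl⟩ := anchoredShape_inj hf0 hf'0 hS
  obtain ⟨rfl, rfl⟩ := anchoredShape_inj hF0 hg'0 hT
  exact ⟨hsub, hreach.isMPDiagram ⟨nu, hnu, rfl⟩, hle, hres⟩

lemma removable_subshape_of_pos {e c : ℕ} {κ : Fin ℓ → ZMod e} {mu nu : Fin ℓ → ℕ → ℕ}
    {fstar : ℕ → ℕ} {Nmu Nlam : Node ℓ} {fxi : Fin (c + 1) → ℕ → ℕ} {Axi : Fin (c + 1) → Node ℓ}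
    (hmu : IsMultipartition mu) (hnu : IsMultipartition nu) (hmusub : diagram mu ⊆ diagram nu)
    (hfstar0 : 0 < fstar 0) (hlamstar : diagram nu \ diagram mu = anchoredShape Nlam fstar)
    (hcong : res e κ Nmu = res e κ Nlam) (hxi : ∀ j : Fin (c + 1), 0 < fxi j 0)
    (hxic : anchoredShape (Axi (Fin.last c)) (fxi (Fin.last c)) = anchoredShape Nlam fstar)
    (hmiddle : ∀ j : Fin (c + 1), 0 < (j : ℕ) → (j : ℕ) < c →
      MiddleShape e κ nu (anchoredShape Nmu fstar) (anchoredShape Nlam fstar)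
        (anchoredShape (Axi j) (fxi j)))
    (j : Fin (c + 1)) (hj : 0 < (j : ℕ)) :
    anchoredShape (Axi j) (fxi j) ⊆ diagram nu ∧
      IsMPDiagram (diagram nu \ anchoredShape (Axi j) (fxi j)) ∧
      (∀ i, fxi j i ≤ fstar i) ∧ res e κ (Axi j) = res e κ Nmu := by
  by_cases hjc : (j : ℕ) < c
  · exact (hmiddle j hj hjc).removable_subshape hnu (hxi j) hfstar0
  obtain rfl : j = Fin.last c := Fin.ext (by simp only [Fin.val_last]; omega)
  obtain ⟨hA, hf⟩ := anchoredShape_inj (hxi _) hfstar0 hxic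
  rw [hxic, ← hlamstar, sdiff_sdiff_cancel_left hmusub, hA, hf]
  exact ⟨sdiff_subset, ⟨mu, hmu, rfl⟩, fun _ => le_rfl, hcong.symm⟩

lemma ofFn_reverse_prod_extTab {c : ℕ} {lam nu : Fin ℓ → ℕ → ℕ} {B : Node ℓ} {F : ℕ → ℕ}
    {N : Node ℓ} {σ : Fin c → Equiv.Perm ℕ} {x : Fin c → Node ℓ × (ℕ → ℕ)}
    (hlamfin : (diagram lam).Finite) (hnufin : (diagram nu).Finite)
    (hlamsub : diagram lam ⊆ diagram nu) (hM : diagram nu \ diagram lam = anchoredShape B F)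
    (h : IsExchangeChain B F (List.ofFn x)) (hD : ∀ k, anchoredShape (x k).1 (x k).2 ⊆ diagram nu)
    (hσ : ∀ k, SwapsInOrder (σ k) (extTab lam nu '' anchoredShape (x k).1 (x k).2)
      (extTab lam nu '' anchoredShape B (x k).2)) (hN : N ∈ diagram nu) :
    (List.ofFn σ).reverse.prod (extTab lam nu N) =
      extTab lam nu (exchangeAlong B (List.ofFn x) N) := by
  have hx : ∀ k, x k ∈ List.ofFn x := fun k => List.mem_ofFn.2 ⟨k, rfl⟩
  have hX : ∀ k, anchoredShape (x k).1 (x k).2 ⊆ diagram lam := fun k => by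
    simpa [← hM, sdiff_sdiff_cancel_left hlamsub] using h.subset_diff (hx k) (hD k)
  have hC : ∀ k, anchoredShape B (x k).2 ⊆ diagram nu \ diagram lam :=
    fun k => hM ▸ h.copy_subset (hx k)
  exact ofFn_reverse_prod_apply (fun k => mapsTo_shapeSwap (hD k) ((hC k).trans sdiff_subset))
    (fun k N hN => (hσ k).apply_eq_shapeSwap ((increasingOn_extTab hlamfin).mono (hX k))
      ((increasingOn_extTab_diff hnufin).mono (hC k)) (injOn_extTab hlamfin hnufin) (hD k)
      ((hC k).trans sdiff_subset) hN) hN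

lemma isStandardTableau_of_exchangeAlong {e n : ℕ} {κ : Fin ℓ → ZMod e}
    {lam mu nu : Fin ℓ → ℕ → ℕ} {B A' : Node ℓ} {F : ℕ → ℕ} {l : List (Node ℓ × (ℕ → ℕ))}
    {π : Equiv.Perm ℕ} (hlam : IsMultipartitionOf n lam) (hmu : (diagram mu).ncard = n)
    (hnufin : (diagram nu).Finite) (hlamEq : diagram nu \ anchoredShape B F = diagram lam)
    (hmuEq : diagram nu \ anchoredShape A' F = diagram mu)
    (h : IsExchangeChain B F (l ++ [(A', F)]))
    (hD : ∀ x ∈ l ++ [(A', F)], anchoredShape x.1 x.2 ⊆ diagram nu)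
    (hX : ∀ x ∈ l, IsMPDiagram (diagram nu \ anchoredShape x.1 x.2))
    (hres : ∀ x ∈ l ++ [(A', F)], res e κ x.1 = res e κ B)
    (hπ : ∀ N ∈ diagram nu,
      π (extTab lam nu N) = extTab lam nu (exchangeAlong B (l ++ [(A', F)]) N)) :
    IsStandardTableau n (diagram mu) (fun N => π (extTab lam nu N)) ∧
      ∀ N ∈ diagram mu, ∀ N' ∈ diagram lam, π (extTab lam nu N) = initTab lam N' →
        res e κ N = res e κ N' := by
  obtain ⟨hlamMP, hlamcard⟩ := hlam
  have hlamfin := diagram_finite hlamMP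
  have hlamsub : diagram lam ⊆ diagram nu := hlamEq ▸ sdiff_subset
  have hmusub : diagram mu ⊆ diagram nu := hmuEq ▸ sdiff_subset
  have hT := injOn_extTab hlamfin hnufin
  have hΦ : MapsTo (exchangeAlong B (l ++ [(A', F)])) (diagram mu) (diagram lam) :=
    hlamEq ▸ hmuEq ▸ h.mapsTo_exchangeAlong hD
  have hτ : ∀ N ∈ diagram mu,
      π (extTab lam nu N) = extTab lam nu (exchangeAlong B (l ++ [(A', F)]) N) :=
    fun N hN => hπ N (hmusub hN)
  refine ⟨isStandardTableau_of_eqOn_comp (hlamcard ▸ bijOn_extTab hlamfin)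
    (increasingOn_extTab hlamfin) hΦ (fun N hN N' hN' hNN' => ?_) hτ
    (fun a ha b hb hab => hT (hmusub ha) (hmusub hb) (π.injective hab)) hmu, ?_⟩
  · rw [← hmuEq] at hN hN'
    exact h.exchangeAlong_lt_of_rightOrBelow (hlamEq ▸ ⟨lam, hlamMP, rfl⟩) hX hN.2 hN' hNN'
  intro N hN N' hN' hτN
  have hΦN : exchangeAlong B (l ++ [(A', F)]) N = N' :=
    hT (hlamsub (hΦ hN)) (hlamsub hN') (by rw [← hτ N hN, hτN, extTab_of_mem hN']; rfl)
  rw [← hΦN, res_exchangeAlong hres]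

end CarterPayne

open CarterPayne in
theorem statement6_general (e ℓ n γ c : ℕ)
    (κ : Fin ℓ → ZMod e)
    (lam mu nu : Fin ℓ → ℕ → ℕ)
    (hlam : IsMultipartitionOf n lam) (hmu : IsMultipartitionOf n mu)
    (hnu : IsMultipartitionOf (n + γ) nu)
    (hunion : diagram nu = diagram lam ∪ diagram mu)
    (fstar : ℕ → ℕ) (Nmu Nlam : Node ℓ)
    (hfstar0 : 0 < fstar 0)
    (hmustar : diagram nu \ diagram lam = anchoredShape Nmu fstar)
    (hlamstar : diagram nu \ diagram mu = anchoredShape Nlam fstar)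
    (hcong : res e κ Nmu = res e κ Nlam)
    (hprec : ShapePrec (anchoredShape Nmu fstar) (anchoredShape Nlam fstar))
    (fxi : Fin (c + 1) → ℕ → ℕ) (Axi : Fin (c + 1) → Node ℓ)
    (hxi : ∀ j : Fin (c + 1), IsPartitionFun (fxi j) ∧ 0 < fxi j 0)
    (hxi0 : anchoredShape (Axi 0) (fxi 0) = anchoredShape Nmu fstar)
    (hxic : anchoredShape (Axi (Fin.last c)) (fxi (Fin.last c)) = anchoredShape Nlam fstar)
    (hchain : ∀ j k : Fin (c + 1), j < k →
      ShapePrec (anchoredShape (Axi j) (fxi j)) (anchoredShape (Axi k) (fxi k)))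
    (hmaximal : ∀ j : Fin (c + 1), 0 < (j : ℕ) → (j : ℕ) < c →
      MaximalMiddleShape e κ nu (anchoredShape Nmu fstar) (anchoredShape Nlam fstar)
        (anchoredShape (Axi j) (fxi j)))
    (σ : Fin c → Equiv.Perm ℕ)
    (hσ : ∀ j : Fin c,
      SwapsInOrder (σ j) (extTab lam nu '' anchoredShape (Axi j.succ) (fxi j.succ))
        (extTab lam nu '' anchoredShape Nmu (fxi j.succ))) :
    IsStandardTableau n (diagram mu)
      (fun N => ((List.ofFn σ).reverse.prod : Equiv.Perm ℕ) (extTab lam nu N)) ∧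
    ∀ N ∈ diagram mu, ∀ N' ∈ diagram lam,
      ((List.ofFn σ).reverse.prod : Equiv.Perm ℕ) (extTab lam nu N) = initTab lam N' →
      res e κ N = res e κ N' := by
  have hlamsub : diagram lam ⊆ diagram nu := hunion ▸ Set.subset_union_left
  have hmusub : diagram mu ⊆ diagram nu := hunion ▸ Set.subset_union_right
  have hnufin := diagram_finite hnu.1
  obtain ⟨c, rfl⟩ : ∃ c', c = c' + 1 := Nat.exists_eq_succ_of_ne_zero <| by
    rintro rfl
    have hM := anchor_mem_anchoredShape (A := Nmu) hfstar0
    exact nodeLt_irrefl Nmu (hprec _ hM _ (hxic ▸ hxi0 ▸ hM))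
  have hshape := removable_subshape_of_pos hmu.1 hnu.1 hmusub hfstar0 hlamstar hcong
    (fun j => (hxi j).2) hxic fun j hj hjc => (hmaximal j hj hjc).1
  set x : Fin (c + 1) → Node ℓ × (ℕ → ℕ) := fun k => (Axi k.succ, fxi k.succ)
  have hxchain : IsExchangeChain Nmu fstar (List.ofFn x) :=
    ⟨List.forall_mem_ofFn_iff.2 fun k => (hxi _).1,
      List.forall_mem_ofFn_iff.2 fun k => (hshape _ k.succ_pos).2.2.1,
      List.forall_mem_ofFn_iff.2 fun k => hxi0 ▸ hchain 0 k.succ k.succ_pos,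
      List.pairwise_ofFn.2 fun j k hjk => hchain _ _ (Fin.succ_lt_succ_iff.2 hjk)⟩
  have hπ := fun N (hN : N ∈ diagram nu) => ofFn_reverse_prod_extTab
    (hnufin.subset hlamsub) hnufin hlamsub hmustar hxchain (fun k => (hshape _ k.succ_pos).1)
    hσ hN
  have hlist : List.ofFn x = List.ofFn (fun k : Fin c => x k.castSucc) ++ [(Nlam, fstar)] := by
    obtain ⟨hA, hf⟩ := anchoredShape_inj (hxi _).2 hfstar0 hxic
    rw [List.ofFn_succ', List.concat_eq_append]
    simp only [x, Fin.succ_last, hA, hf]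
  have hshapes : ∀ y ∈ List.ofFn x, anchoredShape y.1 y.2 ⊆ diagram nu ∧
      IsMPDiagram (diagram nu \ anchoredShape y.1 y.2) ∧ res e κ y.1 = res e κ Nmu :=
    List.forall_mem_ofFn_iff.2 fun k =>
      ⟨(hshape _ k.succ_pos).1, (hshape _ k.succ_pos).2.1, (hshape _ k.succ_pos).2.2.2⟩
  rw [hlist] at hxchain hπ hshapes
  exact isStandardTableau_of_exchangeAlong hlam hmu.2 hnufin
    (by rw [← hmustar, Set.sdiff_sdiff_cancel_left hlamsub])
    (by rw [← hlamstar, Set.sdiff_sdiff_cancel_left hmusub]) hxchain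
    (fun y hy => (hshapes y hy).1) (fun y hy => (hshapes y (List.mem_append_left _ hy)).2.1)
    (fun y hy => (hshapes y hy).2.2) hπ

open CarterPayne in
/-- **Straight-shape Carter–Payne setup, image of the Specht generator.**
Let `λ, μ` be `ℓ`-multipartitions of `n` with `μ` strictly dominating `λ`, let
`ν = λ ∪ μ` be a multipartition of `n + γ`, and suppose `[μ*] = [ν] \ [λ]` and
`[λ*] = [ν] \ [μ]` are congruent removable `e`-small straight shapes (both with underlying
partition `fstar`, anchored at `Nmu` resp. `Nlam`, with matching residues), with every node
of `[μ*]` preceding every node of `[λ*]`.  Let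
`[μ*] = [ξ⁰] ≺ [ξ¹] ≺ ⋯ ≺ [ξ^c] = [λ*]` be the chain in which `[ξ¹], …, [ξ^{c-1}]` are the
maximal removable `e`-small straight shapes of `[ν]` that are subshapes of `[μ*]` and lie
strictly between `[μ*]` and `[λ*]`, and for `1 ≤ j ≤ c` let `σ_{μ*,ξʲ}` be the permutation
exchanging, in increasing order, the entries of `𝔱_λ^ν` on `[ξʲ]` with its entries on the
copy of `[ξʲ]` anchored at the top-left node of `[μ*]`.  Then
`𝔱*_μ = (𝔱_λ^ν σ_{μ*,ξ¹} ⋯ σ_{μ*,ξ^c})↓n` is a standard `μ`-tableau, and for every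
`k ∈ {1, …, n}` the residue of `(𝔱*_μ)⁻¹(k)` equals the residue of `(𝔱^λ)⁻¹(k)`. -/
theorem statement6 (e ℓ n γ c : ℕ) (he : 2 ≤ e) (hℓ : 1 ≤ ℓ)
    (κ : Fin ℓ → ZMod e)
    (lam mu nu : Fin ℓ → ℕ → ℕ)
    (hlam : IsMultipartitionOf n lam) (hmu : IsMultipartitionOf n mu)
    (hdom : Dominates mu lam) (hne : mu ≠ lam)
    (hnu : IsMultipartitionOf (n + γ) nu)
    (hunion : diagram nu = diagram lam ∪ diagram mu)
    (fstar : ℕ → ℕ) (Nmu Nlam : Node ℓ)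
    (hfstar : IsPartitionFun fstar) (hfstar0 : 0 < fstar 0)
    (hmustar : diagram nu \ diagram lam = anchoredShape Nmu fstar)
    (hlamstar : diagram nu \ diagram mu = anchoredShape Nlam fstar)
    (hcong : res e κ Nmu = res e κ Nlam)
    (hremM : IsRemovableShape nu (anchoredShape Nmu fstar))
    (hremL : IsRemovableShape nu (anchoredShape Nlam fstar))
    (hsmallM : ESmall e κ (anchoredShape Nmu fstar))
    (hsmallL : ESmall e κ (anchoredShape Nlam fstar))
    (hprec : ShapePrec (anchoredShape Nmu fstar) (anchoredShape Nlam fstar))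
    (fxi : Fin (c + 1) → ℕ → ℕ) (Axi : Fin (c + 1) → Node ℓ)
    (hxi : ∀ j : Fin (c + 1), IsPartitionFun (fxi j) ∧ 0 < fxi j 0)
    (hxi0 : anchoredShape (Axi 0) (fxi 0) = anchoredShape Nmu fstar)
    (hxic : anchoredShape (Axi (Fin.last c)) (fxi (Fin.last c)) = anchoredShape Nlam fstar)
    (hchain : ∀ j k : Fin (c + 1), j < k →
      ShapePrec (anchoredShape (Axi j) (fxi j)) (anchoredShape (Axi k) (fxi k)))
    (hmaximal : ∀ j : Fin (c + 1), 0 < (j : ℕ) → (j : ℕ) < c →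
      MaximalMiddleShape e κ nu (anchoredShape Nmu fstar) (anchoredShape Nlam fstar)
        (anchoredShape (Axi j) (fxi j)))
    (hallmax : ∀ S : Set (Node ℓ),
      MaximalMiddleShape e κ nu (anchoredShape Nmu fstar) (anchoredShape Nlam fstar) S →
      ∃ j : Fin (c + 1), 0 < (j : ℕ) ∧ (j : ℕ) < c ∧ S = anchoredShape (Axi j) (fxi j))
    (σ : Fin c → Equiv.Perm ℕ)
    (hσ : ∀ j : Fin c,
      SwapsInOrder (σ j) (extTab lam nu '' anchoredShape (Axi j.succ) (fxi j.succ))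
        (extTab lam nu '' anchoredShape Nmu (fxi j.succ))) :
    IsStandardTableau n (diagram mu)
      (fun N => ((List.ofFn σ).reverse.prod : Equiv.Perm ℕ) (extTab lam nu N)) ∧
    ∀ N ∈ diagram mu, ∀ N' ∈ diagram lam,
      ((List.ofFn σ).reverse.prod : Equiv.Perm ℕ) (extTab lam nu N) = initTab lam N' →
      res e κ N = res e κ N' :=
  statement6_general e ℓ n γ c κ lam mu nu hlam hmu hnu hunion fstar Nmu Nlam hfstar0 hmustar
    hlamstar hcong hprec fxi Axi hxi hxi0 hxic hchain hmaximal σ hσ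
end

section
/- Fix an integer e ≥ 2, a residue i₁ ∈ ℤ/eℤ, and partitions ρ of γ and ξ of γ′ whose Young diagrams, with residues res(r,c) = c − r + i₁, are both e-small. Form the bipartition (ρ, ξ). For each j with (j,j,2) in the Young diagram, let H_j be the j-th hook of the second component, i.e. the set of nodes (j,y,2) with y ≥ j together with the nodes (x,j,2) with x ≥ j. Then for every standard (ρ,ξ)-tableau 𝔱 with the same residue sequence as 𝔱_{ξ,ρ}, and for each such j, the nodes {𝔱^{−1}(𝔱_{ξ,ρ}(N)) : N ∈ H_j} all lie in the same component of the bipartition. -/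
namespace CarterPayne

/-- The bipartition `(ρ, ξ)` as a function `Fin 2 → ℕ → ℕ`
(component `0` is `ρ`, component `1` is `ξ`). -/
def bip (ρf ξf : ℕ → ℕ) : Fin 2 → ℕ → ℕ := fun m => if m = 0 then ρf else ξf

/-- The ordering used to define `𝔱_{ξ,ρ}`: all nodes of the second component come first,
in lexicographic order, then all nodes of the first component, in lexicographic order. -/
def keyLt (N N' : Node 2) : Prop :=
  (N.1 = 1 ∧ N'.1 = 0) ∨
    (N.1 = N'.1 ∧ (N.2.1 < N'.2.1 ∨ (N.2.1 = N'.2.1 ∧ N.2.2 < N'.2.2)))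

/-- The standard `(ρ,ξ)`-tableau `𝔱_{ξ,ρ}`, whose entries `1, …, γ'` fill the second
component in lexicographic order and whose entries `γ'+1, …, γ'+γ` fill the first
component in lexicographic order. -/
noncomputable def tXiRho (ρf ξf : ℕ → ℕ) (N : Node 2) : ℕ :=
  1 + Set.ncard {N' ∈ diagram (bip ρf ξf) | keyLt N' N}

end CarterPayne

namespace CarterPayne

namespace CP

lemma fin2 : ∀ m : Fin 2, m = 0 ∨ m = 1 := by decide

lemma keyLt_iff {m m' : Fin 2} {r r' c c' : ℕ} :
    keyLt (m, r, c) (m', r', c') ↔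
      (m = 1 ∧ m' = 0) ∨ (m = m' ∧ (r < r' ∨ (r = r' ∧ c < c'))) := Iff.rfl

lemma keyLt_val {N N' : Node 2} : keyLt N N' ↔
    (N'.1.val < N.1.val ∨ (N.1.val = N'.1.val ∧
      (N.2.1 < N'.2.1 ∨ (N.2.1 = N'.2.1 ∧ N.2.2 < N'.2.2)))) := by
  have hm := N.1.2; have hm' := N'.1.2
  simp only [keyLt, Fin.ext_iff, Fin.val_one, Fin.val_zero]
  omega

lemma keyLt_irrefl (N : Node 2) : ¬ keyLt N N := by
  rw [keyLt_val]; omega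

lemma keyLt_trans {N1 N2 N3 : Node 2} (h12 : keyLt N1 N2) (h23 : keyLt N2 N3) :
    keyLt N1 N3 := by
  rw [keyLt_val] at *; omega

lemma keyLt_tri {N N' : Node 2} (h : N ≠ N') : keyLt N N' ∨ keyLt N' N := by
  have hne : N.1.val ≠ N'.1.val ∨ N.2.1 ≠ N'.2.1 ∨ N.2.2 ≠ N'.2.2 := by
    by_contra hc
    push_neg at hc
    exact h (by
      rcases N with ⟨m, r, c⟩; rcases N' with ⟨m', r', c'⟩
      simp only at hc
      simp [Prod.ext_iff, Fin.ext_iff, hc.1, hc.2.1, hc.2.2])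
  rw [keyLt_val, keyLt_val]; omega

variable {ρf ξf : ℕ → ℕ}

lemma mem_dia0 {r c : ℕ} : ((0 : Fin 2), r, c) ∈ diagram (bip ρf ξf) ↔ c < ρf r := by
  simp [diagram, bip]

lemma mem_dia1 {r c : ℕ} : ((1 : Fin 2), r, c) ∈ diagram (bip ρf ξf) ↔ c < ξf r := by
  simp [diagram, bip]

lemma bip0 : bip ρf ξf 0 = ρf := by simp [bip]

lemma bip1 : bip ρf ξf 1 = ξf := by
  simp [bip, (by decide : ¬ ((1:Fin 2) = 0))]

lemma dia_mono (hρ : IsPartitionFun ρf) (hξ : IsPartitionFun ξf)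
    {m : Fin 2} {r c : ℕ} (hN : (m, r, c) ∈ diagram (bip ρf ξf))
    {r' c' : ℕ} (hr : r' ≤ r) (hc : c' ≤ c) : (m, r', c') ∈ diagram (bip ρf ξf) := by
  rcases fin2 m with h | h <;> subst h
  · rw [mem_dia0] at hN ⊢
    exact lt_of_le_of_lt hc (lt_of_lt_of_le hN (hρ.1 r' r hr))
  · rw [mem_dia1] at hN ⊢
    exact lt_of_le_of_lt hc (lt_of_lt_of_le hN (hξ.1 r' r hr))

lemma dia_finite (hρ : IsPartitionFun ρf) (hξ : IsPartitionFun ξf) :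
    (diagram (bip ρf ξf)).Finite := by
  obtain ⟨Bρ, hBρ⟩ := hρ.2
  obtain ⟨Bξ, hBξ⟩ := hξ.2
  apply Set.Finite.subset
    ((Set.finite_univ (α := Fin 2)).prod
      ((Set.finite_Iio (max Bρ Bξ)).prod (Set.finite_Iio (max (ρf 0) (ξf 0)))))
  rintro ⟨m, r, c⟩ hm
  refine ⟨Set.mem_univ _, ?_, ?_⟩ <;> simp only [Set.mem_Iio] <;>
    rcases fin2 m with h | h <;> subst h
  · rw [mem_dia0] at hm
    by_contra hR; push_neg at hR
    rw [hBρ r (le_trans (le_max_left _ _) hR)] at hm; omega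
  · rw [mem_dia1] at hm
    by_contra hR; push_neg at hR
    rw [hBξ r (le_trans (le_max_right _ _) hR)] at hm; omega
  · rw [mem_dia0] at hm
    exact lt_of_lt_of_le hm (le_trans (hρ.1 0 r (Nat.zero_le r)) (le_max_left _ _))
  · rw [mem_dia1] at hm
    exact lt_of_lt_of_le hm (le_trans (hξ.1 0 r (Nat.zero_le r)) (le_max_right _ _))


lemma keyLt_comp1 {M N : Node 2} (h : keyLt M N) (hN : N.1 = 1) : M.1 = 1 := by
  rw [keyLt_val] at h
  have h1 := M.1.2
  have h2 : N.1.val = 1 := by simp [hN]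
  have : M.1.val = 1 := by omega
  exact Fin.ext (by simp [this])

lemma sep_finite (hρ : IsPartitionFun ρf) (hξ : IsPartitionFun ξf) (P : Node 2 → Prop) :
    {N' ∈ diagram (bip ρf ξf) | P N'}.Finite :=
  (dia_finite hρ hξ).subset (fun _ hx => hx.1)

lemma s_lt_of_keyLt (hρ : IsPartitionFun ρf) (hξ : IsPartitionFun ξf)
    {M N : Node 2} (hM : M ∈ diagram (bip ρf ξf)) (h : keyLt M N) :
    tXiRho ρf ξf M < tXiRho ρf ξf N := by
  unfold tXiRho
  have hsub : insert M {N' ∈ diagram (bip ρf ξf) | keyLt N' M}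
      ⊆ {N' ∈ diagram (bip ρf ξf) | keyLt N' N} := by
    rintro P hP
    rcases Set.mem_insert_iff.1 hP with rfl | hP
    · exact ⟨hM, h⟩
    · exact ⟨hP.1, keyLt_trans hP.2 h⟩
  have hMnot : M ∉ {N' ∈ diagram (bip ρf ξf) | keyLt N' M} :=
    fun hc => keyLt_irrefl M hc.2
  have h1 : (insert M {N' ∈ diagram (bip ρf ξf) | keyLt N' M}).ncard
      = {N' ∈ diagram (bip ρf ξf) | keyLt N' M}.ncard + 1 :=
    Set.ncard_insert_of_notMem hMnot (sep_finite hρ hξ _)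
  have h2 := Set.ncard_le_ncard hsub (sep_finite hρ hξ _)
  omega

lemma s_lt_iff (hρ : IsPartitionFun ρf) (hξ : IsPartitionFun ξf)
    {M N : Node 2} (hM : M ∈ diagram (bip ρf ξf)) (hN : N ∈ diagram (bip ρf ξf)) :
    tXiRho ρf ξf M < tXiRho ρf ξf N ↔ keyLt M N := by
  constructor
  · intro hlt
    by_contra hk
    rcases eq_or_ne M N with rfl | hne
    · omega
    · rcases keyLt_tri hne with h | h
      · exact hk h
      · exact absurd (s_lt_of_keyLt hρ hξ hN h) (by omega)
  · exact s_lt_of_keyLt hρ hξ hM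

lemma s_injOn (hρ : IsPartitionFun ρf) (hξ : IsPartitionFun ξf) :
    Set.InjOn (tXiRho ρf ξf) (diagram (bip ρf ξf)) := by
  intro M hM N hN hMN
  by_contra hne
  rcases keyLt_tri hne with h | h
  · exact absurd (s_lt_of_keyLt hρ hξ hM h) (by omega)
  · exact absurd (s_lt_of_keyLt hρ hξ hN h) (by omega)

lemma s_mem_Icc (hρ : IsPartitionFun ρf) (hξ : IsPartitionFun ξf)
    {N : Node 2} (hN : N ∈ diagram (bip ρf ξf)) :
    tXiRho ρf ξf N ∈ Set.Icc 1 (diagram (bip ρf ξf)).ncard := by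
  constructor
  · unfold tXiRho; omega
  · have hss : {N' ∈ diagram (bip ρf ξf) | keyLt N' N} ⊂ diagram (bip ρf ξf) := by
      constructor
      · exact fun _ hx => hx.1
      · intro hsub
        exact keyLt_irrefl N (hsub hN).2
    have := Set.ncard_lt_ncard hss (dia_finite hρ hξ)
    unfold tXiRho; omega

lemma s_image (hρ : IsPartitionFun ρf) (hξ : IsPartitionFun ξf) :
    tXiRho ρf ξf '' (diagram (bip ρf ξf)) = Set.Icc 1 (diagram (bip ρf ξf)).ncard := by
  apply Set.eq_of_subset_of_ncard_le
  · rintro x ⟨N, hN, rfl⟩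
    exact s_mem_Icc hρ hξ hN
  · have h1 : (Set.Icc 1 (diagram (bip ρf ξf)).ncard).ncard
        = (diagram (bip ρf ξf)).ncard := by
      rw [← Finset.coe_Icc, Set.ncard_coe_finset, Nat.card_Icc]
      omega
    rw [h1, Set.ncard_image_of_injOn (s_injOn hρ hξ)]
  · exact Set.finite_Icc _ _

lemma ncard_dia (hρ : IsPartitionFun ρf) (hξ : IsPartitionFun ξf) :
    (diagram (bip ρf ξf)).ncard = (∑ᶠ x, ρf x) + (∑ᶠ x, ξf x) := by
  classical
  obtain ⟨Bρ, hBρ⟩ := hρ.2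
  obtain ⟨Bξ, hBξ⟩ := hξ.2
  set R := max Bρ Bξ with hR
  have hρ0 : ∀ i, R ≤ i → ρf i = 0 := fun i hi => hBρ i (le_trans (le_max_left _ _) hi)
  have hξ0 : ∀ i, R ≤ i → ξf i = 0 := fun i hi => hBξ i (le_trans (le_max_right _ _) hi)
  set F : Finset (Node 2) := Finset.univ.biUnion (fun m : Fin 2 =>
    (Finset.range R).biUnion (fun r =>
      (Finset.range (bip ρf ξf m r)).image (fun c => ((m, r, c) : Node 2)))) with hF
  have hFD : (F : Set (Node 2)) = diagram (bip ρf ξf) := by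
    ext ⟨m, r, c⟩
    simp only [hF, Finset.coe_biUnion, Finset.mem_coe, Finset.mem_biUnion,
      Finset.mem_univ, Finset.mem_range, Finset.mem_image, true_and,
      Set.mem_iUnion, diagram, Set.mem_setOf_eq]
    constructor
    · rintro ⟨m', _, r', hr', c', hc', heq⟩
      obtain ⟨h1, h2, h3⟩ : m' = m ∧ r' = r ∧ c' = c := by
        simpa [Prod.ext_iff] using heq
      subst h1; subst h2; subst h3
      exact hc'
    · intro hc
      refine ⟨m, trivial, r, ?_, c, hc, rfl⟩
      by_contra hr; push_neg at hr
      rcases fin2 m with h | h <;> subst h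
      · rw [bip0, hρ0 r hr] at hc; omega
      · rw [bip1, hξ0 r hr] at hc; omega
  have hcard : F.card = (∑ᶠ x, ρf x) + (∑ᶠ x, ξf x) := by
    rw [hF, Finset.card_biUnion]
    · have hinner : ∀ m : Fin 2, ((Finset.range R).biUnion (fun r =>
          (Finset.range (bip ρf ξf m r)).image (fun c => ((m, r, c) : Node 2)))).card
          = ∑ r ∈ Finset.range R, bip ρf ξf m r := by
        intro m
        rw [Finset.card_biUnion]
        · refine Finset.sum_congr rfl (fun r _ => ?_)
          rw [Finset.card_image_of_injective _ (fun a b hab => by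
            simpa [Prod.ext_iff] using hab), Finset.card_range]
        · intro r _ r' _ hrr'
          simp only [Finset.disjoint_left, Finset.mem_image, Finset.mem_range]
          rintro a ⟨c, _, rfl⟩ ⟨c', _, heq⟩
          obtain ⟨-, h2, -⟩ : m = m ∧ r' = r ∧ c' = c := by simpa [Prod.ext_iff] using heq
          exact hrr' h2.symm
      rw [Finset.sum_congr rfl (fun m _ => hinner m), Fin.sum_univ_two]
      simp only [bip0, bip1]
      have hsρ : ∑ᶠ x, ρf x = ∑ r ∈ Finset.range R, ρf r := by
        apply finsum_eq_finset_sum_of_support_subset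
        intro x hx
        simp only [Function.mem_support] at hx
        simp only [Finset.coe_range, Set.mem_Iio]
        by_contra hxR; push_neg at hxR
        exact hx (hρ0 x hxR)
      have hsξ : ∑ᶠ x, ξf x = ∑ r ∈ Finset.range R, ξf r := by
        apply finsum_eq_finset_sum_of_support_subset
        intro x hx
        simp only [Function.mem_support] at hx
        simp only [Finset.coe_range, Set.mem_Iio]
        by_contra hxR; push_neg at hxR
        exact hx (hξ0 x hxR)
      rw [hsρ, hsξ]
    · intro m _ m' _ hmm'
      simp only [Finset.disjoint_left, Finset.mem_biUnion, Finset.mem_image,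
        Finset.mem_range]
      rintro a ⟨r, _, c, _, rfl⟩ ⟨r', _, c', _, heq⟩
      obtain ⟨h1, -, -⟩ : m' = m ∧ r' = r ∧ c' = c := by simpa [Prod.ext_iff] using heq
      exact hmm' h1.symm
  rw [← hFD, Set.ncard_coe_finset, hcard]


def dgn (N : Node 2) : ℤ := (N.2.2 : ℤ) - (N.2.1 : ℤ)

def dpn (N : Node 2) : ℕ := min N.2.1 N.2.2

lemma res_dg {e : ℕ} {i₁ : ZMod e} (N : Node 2) :
    res e (fun _ : Fin 2 => i₁) N = ((dgn N : ℤ) : ZMod e) + i₁ := by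
  unfold res dgn
  push_cast
  ring

lemma node_ext {N N' : Node 2} (h1 : N.1 = N'.1) (h2 : dgn N = dgn N')
    (h3 : dpn N = dpn N') : N = N' := by
  rcases N with ⟨m, r, c⟩; rcases N' with ⟨m', r', c'⟩
  simp only [dgn, dpn] at h2 h3
  simp only at h1
  subst h1
  obtain ⟨h4, h5⟩ : r = r' ∧ c = c' := by omega
  rw [h4, h5]

lemma dgn_mk {m : Fin 2} {r c : ℕ} : dgn (m, r, c) = (c : ℤ) - r := rfl

lemma dpn_mk {m : Fin 2} {r c : ℕ} : dpn (m, r, c) = min r c := rfl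

lemma diag_realize (hρ : IsPartitionFun ρf) (hξ : IsPartitionFun ξf)
    {N : Node 2} (hN : N ∈ diagram (bip ρf ξf)) {d : ℤ}
    (h1 : min (dgn N) 0 ≤ d) (h2 : d ≤ max (dgn N) 0) :
    ∃ N' ∈ diagram (bip ρf ξf), N'.1 = N.1 ∧ dgn N' = d := by
  rcases N with ⟨m, r, c⟩
  rw [dgn_mk] at h1 h2
  rcases lt_trichotomy d 0 with hd | hd | hd
  · -- d < 0 : use (c + (-d).toNat, c)
    have hcr : (c : ℤ) - r ≤ d := by omega
    refine ⟨(m, c + (-d).toNat, c), ?_, rfl, ?_⟩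
    · exact dia_mono hρ hξ hN (by omega) le_rfl
    · rw [dgn_mk]; omega
  · -- d = 0
    subst hd
    refine ⟨(m, min r c, min r c), ?_, rfl, ?_⟩
    · exact dia_mono hρ hξ hN (by omega) (by omega)
    · rw [dgn_mk]; omega
  · -- d > 0 : use (r, r + d.toNat)
    have hcr : d ≤ (c : ℤ) - r := by omega
    refine ⟨(m, r, r + d.toNat), ?_, rfl, ?_⟩
    · exact dia_mono hρ hξ hN le_rfl (by omega)
    · rw [dgn_mk]; omega

lemma dg_spread {e : ℕ} {i₁ : ZMod e} (he : 2 ≤ e) {m : Fin 2}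
    (hsm : ESmall e (fun _ : Fin 2 => i₁) {N ∈ diagram (bip ρf ξf) | N.1 = m})
    (hρ : IsPartitionFun ρf) (hξ : IsPartitionFun ξf)
    {N N' : Node 2} (hN : N ∈ diagram (bip ρf ξf)) (hmN : N.1 = m)
    (hN' : N' ∈ diagram (bip ρf ξf)) (hmN' : N'.1 = m) :
    dgn N' - dgn N ≤ (e : ℤ) - 2 := by
  by_contra hcon
  push_neg at hcon
  obtain ⟨istar, histar⟩ := hsm
  haveI : NeZero e := ⟨by omega⟩
  set a := dgn N with ha
  set x := istar - i₁ - (a : ZMod e) with hx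
  set v := a + (x.val : ℤ) with hv
  have hcast : ((v : ℤ) : ZMod e) = istar - i₁ := by
    rw [hv]
    push_cast
    rw [ZMod.natCast_val, ZMod.cast_id, hx]
    ring
  have hvlt : (x.val : ℤ) < e := by exact_mod_cast ZMod.val_lt x
  have hval0 : (0 : ℤ) ≤ (x.val : ℤ) := by positivity
  have hb1 : a ≤ v := by omega
  have hb2 : v ≤ dgn N' := by omega
  have hreal : ∃ Z ∈ diagram (bip ρf ξf), Z.1 = m ∧ dgn Z = v := by
    rcases le_or_gt v 0 with hv0 | hv0
    · obtain ⟨Z, hZ, hZ1, hZ2⟩ := diag_realize hρ hξ hN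
        (d := v) (by omega) (by rw [le_max_iff]; right; omega)
      exact ⟨Z, hZ, by rw [hZ1, hmN], hZ2⟩
    · obtain ⟨Z, hZ, hZ1, hZ2⟩ := diag_realize hρ hξ hN'
        (d := v) (by rw [min_le_iff]; right; omega) (by rw [le_max_iff]; left; omega)
      exact ⟨Z, hZ, by rw [hZ1, hmN'], hZ2⟩
  obtain ⟨Z, hZ, hZm, hZd⟩ := hreal
  apply histar Z ⟨hZ, hZm⟩
  rw [res_dg, hZd, hcast]
  ring


lemma int_eq_of_cast_eq {e : ℕ} (he : 2 ≤ e) {a b : ℤ}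
    (h : ((a : ℤ) : ZMod e) = ((b : ℤ) : ZMod e))
    (h1 : a - b < e) (h2 : b - a < e) : a = b := by
  have hd : ((a - b : ℤ) : ZMod e) = 0 := by push_cast; rw [h]; ring
  rw [ZMod.intCast_zmod_eq_zero_iff_dvd] at hd
  obtain ⟨k, hk⟩ := hd
  have he' : (0 : ℤ) < e := by omega
  have hk1 : k < 1 := by
    by_contra hgt; push_neg at hgt
    nlinarith
  have hk2 : -1 < k := by
    by_contra hgt; push_neg at hgt
    nlinarith
  have hk0 : k = 0 := by omega
  rw [hk0, mul_zero] at hk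
  omega

lemma dg_eq_of_res_eq {e : ℕ} {i₁ : ZMod e} (he : 2 ≤ e)
    (hs0 : ESmall e (fun _ : Fin 2 => i₁) {N ∈ diagram (bip ρf ξf) | N.1 = 0})
    (hs1 : ESmall e (fun _ : Fin 2 => i₁) {N ∈ diagram (bip ρf ξf) | N.1 = 1})
    (hρ : IsPartitionFun ρf) (hξ : IsPartitionFun ξf)
    {N N' : Node 2} (hN : N ∈ diagram (bip ρf ξf)) (hN' : N' ∈ diagram (bip ρf ξf))
    (hc : N.1 = N'.1)
    (hr : res e (fun _ : Fin 2 => i₁) N = res e (fun _ : Fin 2 => i₁) N') :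
    dgn N = dgn N' := by
  rw [res_dg, res_dg] at hr
  have hcast : ((dgn N : ℤ) : ZMod e) = ((dgn N' : ℤ) : ZMod e) := by
    exact add_right_cancel hr
  have hsp1 : dgn N' - dgn N ≤ (e : ℤ) - 2 := by
    rcases fin2 N.1 with h | h
    · exact dg_spread he hs0 hρ hξ hN h hN' (hc ▸ h)
    · exact dg_spread he hs1 hρ hξ hN h hN' (hc ▸ h)
  have hsp2 : dgn N - dgn N' ≤ (e : ℤ) - 2 := by
    rcases fin2 N.1 with h | h
    · exact dg_spread he hs0 hρ hξ hN' (hc ▸ h) hN h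
    · exact dg_spread he hs1 hρ hξ hN' (hc ▸ h) hN h
  exact int_eq_of_cast_eq he hcast (by omega) (by omega)

lemma dg_succ_of_res_succ {e : ℕ} {i₁ : ZMod e} (he : 2 ≤ e)
    (hs0 : ESmall e (fun _ : Fin 2 => i₁) {N ∈ diagram (bip ρf ξf) | N.1 = 0})
    (hs1 : ESmall e (fun _ : Fin 2 => i₁) {N ∈ diagram (bip ρf ξf) | N.1 = 1})
    (hρ : IsPartitionFun ρf) (hξ : IsPartitionFun ξf)
    {N N' : Node 2} (hN : N ∈ diagram (bip ρf ξf)) (hN' : N' ∈ diagram (bip ρf ξf))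
    (hc : N.1 = N'.1)
    (hr : res e (fun _ : Fin 2 => i₁) N' = res e (fun _ : Fin 2 => i₁) N + 1) :
    dgn N' = dgn N + 1 := by
  rw [res_dg, res_dg] at hr
  have h' : ((dgn N' : ℤ) : ZMod e) = ((dgn N : ℤ) : ZMod e) + 1 := by
    linear_combination hr
  have hcast : ((dgn N' : ℤ) : ZMod e) = ((dgn N + 1 : ℤ) : ZMod e) := by
    push_cast
    rw [h']
  have hsp1 : dgn N' - dgn N ≤ (e : ℤ) - 2 := by
    rcases fin2 N.1 with h | h
    · exact dg_spread he hs0 hρ hξ hN h hN' (hc ▸ h)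
    · exact dg_spread he hs1 hρ hξ hN h hN' (hc ▸ h)
  have hsp2 : dgn N - dgn N' ≤ (e : ℤ) - 2 := by
    rcases fin2 N.1 with h | h
    · exact dg_spread he hs0 hρ hξ hN' (hc ▸ h) hN h
    · exact dg_spread he hs1 hρ hξ hN' (hc ▸ h) hN h
  exact int_eq_of_cast_eq he hcast (by omega) (by omega)

lemma dg_zero_of_cast_zero {e : ℕ} {i₁ : ZMod e} (he : 2 ≤ e)
    (hs1 : ESmall e (fun _ : Fin 2 => i₁) {N ∈ diagram (bip ρf ξf) | N.1 = 1})
    (hρ : IsPartitionFun ρf) (hξ : IsPartitionFun ξf)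
    {N : Node 2} (hN : N ∈ diagram (bip ρf ξf)) (hm : N.1 = 1)
    (h : ((dgn N : ℤ) : ZMod e) = 0) : dgn N = 0 := by
  rcases N with ⟨m, r, c⟩
  simp only at hm
  subst hm
  have h00 : ((1 : Fin 2), 0, 0) ∈ diagram (bip ρf ξf) :=
    dia_mono hρ hξ hN (Nat.zero_le r) (Nat.zero_le c)
  have hsp1 : dgn ((1 : Fin 2), r, c) - dgn ((1 : Fin 2), 0, 0) ≤ (e : ℤ) - 2 :=
    dg_spread he hs1 hρ hξ h00 rfl hN rfl
  have hsp2 : dgn ((1 : Fin 2), 0, 0) - dgn ((1 : Fin 2), r, c) ≤ (e : ℤ) - 2 :=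
    dg_spread he hs1 hρ hξ hN rfl h00 rfl
  have h0 : dgn ((1 : Fin 2), 0, 0) = 0 := by rw [dgn_mk]; ring
  have := int_eq_of_cast_eq he (a := dgn ((1 : Fin 2), r, c)) (b := 0)
    (by rw [h]; norm_num) (by omega) (by omega)
  omega


variable {t : Node 2 → ℕ} {n : ℕ}

lemma t_row (hstd : IsStandardTableau n (diagram (bip ρf ξf)) t)
    (hρ : IsPartitionFun ρf) (hξ : IsPartitionFun ξf) {m : Fin 2} {r : ℕ} :
    ∀ {c c' : ℕ}, c < c' → (m, r, c') ∈ diagram (bip ρf ξf) →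
      t (m, r, c) < t (m, r, c') := by
  intro c c' h h2
  induction c' with
  | zero => omega
  | succ k ih =>
    rcases Nat.lt_succ_iff_lt_or_eq.mp h with h' | h'
    · have hk : (m, r, k) ∈ diagram (bip ρf ξf) :=
        dia_mono hρ hξ h2 le_rfl (Nat.le_succ k)
      exact lt_trans (ih h' hk) (hstd.2.1 (m, r, k) hk h2)
    · subst h'
      exact hstd.2.1 (m, r, c) (dia_mono hρ hξ h2 le_rfl (Nat.le_succ c)) h2

lemma t_col (hstd : IsStandardTableau n (diagram (bip ρf ξf)) t)
    (hρ : IsPartitionFun ρf) (hξ : IsPartitionFun ξf) {m : Fin 2} {c : ℕ} :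
    ∀ {r r' : ℕ}, r < r' → (m, r', c) ∈ diagram (bip ρf ξf) →
      t (m, r, c) < t (m, r', c) := by
  intro r r' h h2
  induction r' with
  | zero => omega
  | succ k ih =>
    rcases Nat.lt_succ_iff_lt_or_eq.mp h with h' | h'
    · have hk : (m, k, c) ∈ diagram (bip ρf ξf) :=
        dia_mono hρ hξ h2 (Nat.le_succ k) le_rfl
      exact lt_trans (ih h' hk) (hstd.2.2 (m, k, c) hk h2)
    · subst h'
      exact hstd.2.2 (m, r, c) (dia_mono hρ hξ h2 (Nat.le_succ r) le_rfl) h2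

lemma t_mono (hstd : IsStandardTableau n (diagram (bip ρf ξf)) t)
    (hρ : IsPartitionFun ρf) (hξ : IsPartitionFun ξf) {m : Fin 2} {r c r' c' : ℕ}
    (h2 : (m, r', c') ∈ diagram (bip ρf ξf)) (hr : r ≤ r') (hc : c ≤ c')
    (hne : ¬ (r = r' ∧ c = c')) : t (m, r, c) < t (m, r', c') := by
  rcases Nat.lt_or_ge r r' with hlt | hge
  · have hmid : (m, r, c') ∈ diagram (bip ρf ξf) := dia_mono hρ hξ h2 (le_of_lt hlt) le_rfl
    rcases Nat.lt_or_ge c c' with hc2 | hc2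
    · exact lt_trans (t_row hstd hρ hξ hc2 hmid) (t_col hstd hρ hξ hlt h2)
    · have : c = c' := by omega
      subst this
      exact t_col hstd hρ hξ hlt h2
  · have : r = r' := by omega
    subst this
    have : c < c' := by omega
    exact t_row hstd hρ hξ this h2

lemma chain_down (hstd : IsStandardTableau n (diagram (bip ρf ξf)) t)
    (hρ : IsPartitionFun ρf) (hξ : IsPartitionFun ξf)
    {Z : Node 2} (hZ : Z ∈ diagram (bip ρf ξf)) {q : ℕ} (hq : q ≤ dpn Z) :
    ∃ Z' ∈ diagram (bip ρf ξf), Z'.1 = Z.1 ∧ dgn Z' = dgn Z ∧ dpn Z' = q ∧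
      t Z' ≤ t Z ∧ (q < dpn Z → t Z' < t Z) := by
  rcases Z with ⟨m, r, c⟩
  rw [dpn_mk] at hq ⊢
  set a := min r c - q with ha
  refine ⟨(m, r - a, c - a), dia_mono hρ hξ hZ (by omega) (by omega), rfl, ?_, ?_, ?_, ?_⟩
  · rw [dgn_mk, dgn_mk]; omega
  · rw [dpn_mk]; omega
  · rcases Nat.eq_or_lt_of_le hq with he | hlt
    · have : a = 0 := by omega
      rw [this]
      simp
    · exact le_of_lt (t_mono hstd hρ hξ hZ (by omega) (by omega) (by omega))
  · intro hlt
    exact t_mono hstd hρ hξ hZ (by omega) (by omega) (by omega)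

variable {e : ℕ} {i₁ : ZMod e}

lemma count_eq_dp (he : 2 ≤ e)
    (hs0 : ESmall e (fun _ : Fin 2 => i₁) {N ∈ diagram (bip ρf ξf) | N.1 = 0})
    (hs1 : ESmall e (fun _ : Fin 2 => i₁) {N ∈ diagram (bip ρf ξf) | N.1 = 1})
    (hρ : IsPartitionFun ρf) (hξ : IsPartitionFun ξf)
    (hstd : IsStandardTableau n (diagram (bip ρf ξf)) t)
    {B : Node 2} (hB : B ∈ diagram (bip ρf ξf)) :
    {Z ∈ diagram (bip ρf ξf) | t Z < t B ∧
      res e (fun _ : Fin 2 => i₁) Z = res e (fun _ : Fin 2 => i₁) B ∧ Z.1 = B.1}.ncard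
      = dpn B := by
  set S := {Z ∈ diagram (bip ρf ξf) | t Z < t B ∧
      res e (fun _ : Fin 2 => i₁) Z = res e (fun _ : Fin 2 => i₁) B ∧ Z.1 = B.1} with hS
  have hdg : ∀ Z ∈ S, dgn Z = dgn B := fun Z hZ =>
    dg_eq_of_res_eq he hs0 hs1 hρ hξ hZ.1 hB hZ.2.2.2 hZ.2.2.1
  have hinj : Set.InjOn dpn S := fun Z hZ Z' hZ' h =>
    node_ext (hZ.2.2.2.trans hZ'.2.2.2.symm) ((hdg Z hZ).trans (hdg Z' hZ').symm) h
  have himg : dpn '' S = Set.Iio (dpn B) := by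
    apply Set.Subset.antisymm
    · rintro q ⟨Z, hZ, rfl⟩
      simp only [Set.mem_Iio]
      by_contra hge
      push_neg at hge
      obtain ⟨Z', hZ', hc', hd', hp', hle', -⟩ := chain_down hstd hρ hξ hZ.1 hge
      have hZB : Z' = B :=
        node_ext (hc'.trans hZ.2.2.2) (hd'.trans (hdg Z hZ)) hp'
      rw [hZB] at hle'
      exact absurd hZ.2.1 (by omega)
    · rintro q hq
      simp only [Set.mem_Iio] at hq
      obtain ⟨Z', hZ', hc', hd', hp', -, hlt'⟩ := chain_down hstd hρ hξ hB (le_of_lt hq)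
      refine ⟨Z', ⟨hZ', hlt' hq, ?_, hc'⟩, hp'⟩
      rw [res_dg, res_dg, hd']
  calc S.ncard = (dpn '' S).ncard := (Set.ncard_image_of_injOn hinj).symm
    _ = dpn B := by
        rw [himg, ← Finset.coe_range, Set.ncard_coe_finset, Finset.card_range]

lemma count_lower (he : 2 ≤ e)
    (hρ : IsPartitionFun ρf) (hξ : IsPartitionFun ξf)
    (hstd : IsStandardTableau n (diagram (bip ρf ξf)) t)
    {W : Node 2} (hW : W ∈ diagram (bip ρf ξf)) {K : ℕ} (hK : t W < K)
    {v' : ZMod e} (hWv : res e (fun _ : Fin 2 => i₁) W = v')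
    {mm : Fin 2} (hWm : W.1 = mm) :
    dpn W + 1 ≤ {Z ∈ diagram (bip ρf ξf) | t Z < K ∧
      res e (fun _ : Fin 2 => i₁) Z = v' ∧ Z.1 = mm}.ncard := by
  subst hWv
  subst hWm
  set S := {Z ∈ diagram (bip ρf ξf) | t Z < K ∧
      res e (fun _ : Fin 2 => i₁) Z = res e (fun _ : Fin 2 => i₁) W ∧ Z.1 = W.1} with hS
  have hSfin : S.Finite := (dia_finite hρ hξ).subset (fun _ hx => hx.1)
  have himg : Set.Iic (dpn W) ⊆ dpn '' S := by
    intro q hq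
    simp only [Set.mem_Iic] at hq
    obtain ⟨Z', hZ', hc', hd', hp', hle', -⟩ := chain_down hstd hρ hξ hW hq
    refine ⟨Z', ⟨hZ', by omega, ?_, hc'⟩, hp'⟩
    rw [res_dg, res_dg, hd']
  have h1 : (Set.Iic (dpn W)).ncard ≤ (dpn '' S).ncard :=
    Set.ncard_le_ncard himg (hSfin.image _)
  have h2 : (dpn '' S).ncard ≤ S.ncard := Set.ncard_image_le hSfin
  have h3 : (Set.Iic (dpn W)).ncard = dpn W + 1 := by
    rw [← Finset.coe_Iic, Set.ncard_coe_finset, Nat.card_Iic]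
  omega

lemma count_via_u (hρ : IsPartitionFun ρf) (hξ : IsPartitionFun ξf)
    {u : Node 2 → Node 2}
    (hu : ∀ N ∈ diagram (bip ρf ξf), u N ∈ diagram (bip ρf ξf) ∧ t (u N) = tXiRho ρf ξf N)
    (hru : ∀ N ∈ diagram (bip ρf ξf),
      res e (fun _ : Fin 2 => i₁) (u N) = res e (fun _ : Fin 2 => i₁) N)
    (husurj : ∀ Z ∈ diagram (bip ρf ξf), ∃ M ∈ diagram (bip ρf ξf), u M = Z)
    {NC : Node 2} (hNC : NC ∈ diagram (bip ρf ξf)) (v : ZMod e) (mm : Fin 2) :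
    {Z ∈ diagram (bip ρf ξf) | t Z < tXiRho ρf ξf NC ∧
        res e (fun _ : Fin 2 => i₁) Z = v ∧ Z.1 = mm}.ncard
      = {M ∈ diagram (bip ρf ξf) | keyLt M NC ∧
        res e (fun _ : Fin 2 => i₁) M = v ∧ (u M).1 = mm}.ncard := by
  set LHS := {Z ∈ diagram (bip ρf ξf) | t Z < tXiRho ρf ξf NC ∧
        res e (fun _ : Fin 2 => i₁) Z = v ∧ Z.1 = mm} with hL
  set RHS := {M ∈ diagram (bip ρf ξf) | keyLt M NC ∧
        res e (fun _ : Fin 2 => i₁) M = v ∧ (u M).1 = mm} with hR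
  have himg : u '' RHS = LHS := by
    apply Set.Subset.antisymm
    · rintro Z ⟨M, hM, rfl⟩
      refine ⟨(hu M hM.1).1, ?_, ?_, hM.2.2.2⟩
      · rw [(hu M hM.1).2]
        exact s_lt_of_keyLt hρ hξ hM.1 hM.2.1
      · rw [hru M hM.1, hM.2.2.1]
    · rintro Z hZ
      obtain ⟨M, hM, rfl⟩ := husurj Z hZ.1
      refine ⟨M, ⟨hM, ?_, ?_, hZ.2.2.2⟩, rfl⟩
      · rw [← s_lt_iff hρ hξ hM hNC]
        rw [← (hu M hM).2]
        exact hZ.2.1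
      · rw [← hru M hM]
        exact hZ.2.2.1
  have hinj : Set.InjOn u RHS := by
    intro M hM M' hM' h
    have h1 : tXiRho ρf ξf M = tXiRho ρf ξf M' := by
      rw [← (hu M hM.1).2, ← (hu M' hM'.1).2, h]
    exact s_injOn hρ hξ hM.1 hM'.1 h1
  rw [← himg, Set.ncard_image_of_injOn hinj]

lemma ncard_le_card_of_dpn (he : 2 ≤ e)
    (hs0 : ESmall e (fun _ : Fin 2 => i₁) {N ∈ diagram (bip ρf ξf) | N.1 = 0})
    (hs1 : ESmall e (fun _ : Fin 2 => i₁) {N ∈ diagram (bip ρf ξf) | N.1 = 1})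
    (hρ : IsPartitionFun ρf) (hξ : IsPartitionFun ξf)
    {S : Set (Node 2)} (hSsub : S ⊆ diagram (bip ρf ξf))
    {v : ZMod e} (hres : ∀ Z ∈ S, res e (fun _ : Fin 2 => i₁) Z = v)
    (hcomp : ∀ Z ∈ S, ∃ m : Fin 2, ∀ Z' ∈ S, Z'.1 = m)
    (F : Finset ℕ) (hmap : ∀ Z ∈ S, dpn Z ∈ F) : S.ncard ≤ F.card := by
  rcases Set.eq_empty_or_nonempty S with rfl | ⟨Z₀, hZ₀⟩
  · simp
  obtain ⟨m, hm⟩ := hcomp Z₀ hZ₀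
  have hdg : ∀ Z ∈ S, ∀ Z' ∈ S, dgn Z = dgn Z' := by
    intro Z hZ Z' hZ'
    refine dg_eq_of_res_eq he hs0 hs1 hρ hξ (hSsub hZ) (hSsub hZ')
      ((hm Z hZ).trans (hm Z' hZ').symm) ?_
    rw [hres Z hZ, hres Z' hZ']
  have hinj : Set.InjOn dpn S := fun Z hZ Z' hZ' h =>
    node_ext ((hm Z hZ).trans (hm Z' hZ').symm) (hdg Z hZ Z' hZ') h
  have := Set.ncard_le_ncard_of_injOn (t := (F : Set ℕ)) dpn
    (fun Z hZ => Finset.mem_coe.mpr (hmap Z hZ)) hinj F.finite_toSet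
  rwa [Set.ncard_coe_finset] at this

lemma card_le_ncard_of_map (hρ : IsPartitionFun ρf) (hξ : IsPartitionFun ξf)
    {S : Set (Node 2)} (hSsub : S ⊆ diagram (bip ρf ξf))
    (F : Finset ℕ) (φ : ℕ → Node 2) (hφ : ∀ l ∈ F, φ l ∈ S)
    (hdp : ∀ l ∈ F, dpn (φ l) = l) : F.card ≤ S.ncard := by
  have hSfin : S.Finite := (dia_finite hρ hξ).subset hSsub
  have hinj : Set.InjOn φ (F : Set ℕ) := by
    intro l hl l' hl' h
    have := congrArg dpn h
    rwa [hdp l hl, hdp l' hl'] at this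
  have := Set.ncard_le_ncard_of_injOn (s := (F : Set ℕ)) (t := S) φ
    (fun l hl => hφ l (Finset.mem_coe.mp hl)) hinj hSfin
  rwa [Set.ncard_coe_finset] at this

lemma step (he : 2 ≤ e)
    (hs0 : ESmall e (fun _ : Fin 2 => i₁) {N ∈ diagram (bip ρf ξf) | N.1 = 0})
    (hs1 : ESmall e (fun _ : Fin 2 => i₁) {N ∈ diagram (bip ρf ξf) | N.1 = 1})
    (hρ : IsPartitionFun ρf) (hξ : IsPartitionFun ξf)
    (hstd : IsStandardTableau n (diagram (bip ρf ξf)) t)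
    {u : Node 2 → Node 2}
    (hu : ∀ N ∈ diagram (bip ρf ξf),
      u N ∈ diagram (bip ρf ξf) ∧ t (u N) = tXiRho ρf ξf N)
    (hru : ∀ N ∈ diagram (bip ρf ξf),
      res e (fun _ : Fin 2 => i₁) (u N) = res e (fun _ : Fin 2 => i₁) N)
    (husurj : ∀ Z ∈ diagram (bip ρf ξf), ∃ M ∈ diagram (bip ρf ξf), u M = Z)
    {j : ℕ} {m : Fin 2} {ε : ℕ → Fin 2}
    (Hε : ∀ l, l < j → ∀ M ∈ diagram (bip ρf ξf), M.1 = 1 → dpn M = l → (u M).1 = ε l)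
    {r₀ c₀ : ℕ} (hNC : ((1 : Fin 2), r₀, c₀) ∈ diagram (bip ρf ξf))
    (harm : (r₀ = j ∧ j < c₀) ∨ (c₀ = j ∧ j < r₀))
    (Hhook : ∀ M ∈ diagram (bip ρf ξf), M.1 = 1 → dpn M = j →
      keyLt M ((1 : Fin 2), r₀, c₀) → (u M).1 = m) :
    (u ((1 : Fin 2), r₀, c₀)).1 = m := by
  classical
  set NC : Node 2 := ((1 : Fin 2), r₀, c₀) with hNCdef
  obtain ⟨hBD, hBt⟩ := hu NC hNC
  rcases hB : u NC with ⟨mB, rB, cB⟩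
  rw [hB] at hBD hBt
  show mB = m
  by_contra hBm
  set v := res e (fun _ : Fin 2 => i₁) NC with hv
  have hresB : res e (fun _ : Fin 2 => i₁) ((mB, rB, cB) : Node 2) = v := by
    rw [← hB]; exact hru NC hNC
  set d₀ : ℤ := dgn NC with hd₀
  have hd₀' : (c₀ : ℤ) - (r₀ : ℤ) = d₀ := by rw [hd₀]; rfl
  set EF : Fin 2 → Finset ℕ := fun mm => (Finset.range j).filter (fun l => ε l = mm)
    with hEF
  set Mst : ZMod e → Fin 2 → Set (Node 2) := fun v' mm =>
    {M ∈ diagram (bip ρf ξf) | keyLt M NC ∧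
      res e (fun _ : Fin 2 => i₁) M = v' ∧ (u M).1 = mm} with hMst
  have hcnt : ∀ (v' : ZMod e) (mm : Fin 2),
      {Z ∈ diagram (bip ρf ξf) | t Z < tXiRho ρf ξf NC ∧
        res e (fun _ : Fin 2 => i₁) Z = v' ∧ Z.1 = mm}.ncard = (Mst v' mm).ncard :=
    fun v' mm => count_via_u hρ hξ hu hru husurj hNC v' mm
  -- upper bound for M-sets
  have hupper : ∀ (mm : Fin 2) (v' : ZMod e) (g : ℤ), mm ≠ m →
      (∀ M ∈ diagram (bip ρf ξf), M.1 = 1 →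
        res e (fun _ : Fin 2 => i₁) M = v' → dgn M = g) →
      (g = d₀ - 1 ∨ g = d₀ ∨ g = d₀ + 1) →
      (Mst v' mm).ncard ≤ (EF mm).card := by
    intro mm v' g hmm hg hgval
    apply ncard_le_card_of_dpn he hs0 hs1 hρ hξ (fun M hM => hM.1) (v := v')
      (fun M hM => hM.2.2.1) (fun Z hZ => ⟨1, fun Z' hZ' => keyLt_comp1 hZ'.2.1 rfl⟩)
      (EF mm)
    rintro ⟨mM, rM, cM⟩ hM
    have hM1 : mM = 1 := keyLt_comp1 hM.2.1 rfl
    subst hM1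
    have hdgM : (cM : ℤ) - (rM : ℤ) = g := by
      have := hg _ hM.1 rfl hM.2.2.1
      rwa [dgn_mk] at this
    have hkey' : rM < r₀ ∨ (rM = r₀ ∧ cM < c₀) := by
      have hkey := hM.2.1
      rw [hNCdef, keyLt_iff] at hkey
      rcases hkey with ⟨-, h10⟩ | ⟨-, h⟩
      · exact absurd h10 (by decide)
      · exact h
    have hdple : dpn ((1 : Fin 2), rM, cM) ≤ j := by
      rw [dpn_mk]
      rcases harm with ⟨ha1, ha2⟩ | ⟨ha1, ha2⟩ <;> omega
    have hdplt : dpn ((1 : Fin 2), rM, cM) < j := by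
      rcases Nat.lt_or_ge (dpn ((1 : Fin 2), rM, cM)) j with hlt | hge
      · exact hlt
      · exfalso
        have hdpj : dpn ((1 : Fin 2), rM, cM) = j := by omega
        have h1 := Hhook _ hM.1 rfl hdpj hM.2.1
        exact hmm (hM.2.2.2.symm.trans h1)
    simp only [hEF, Finset.mem_filter, Finset.mem_range]
    have hε := Hε _ hdplt _ hM.1 rfl rfl
    exact ⟨hdplt, hε.symm.trans hM.2.2.2⟩
  -- lower bound for the main class v
  have hlower : ∀ mm : Fin 2, (EF mm).card ≤ (Mst v mm).ncard := by
    intro mm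
    rcases harm with ⟨hr0, hc0⟩ | ⟨hc0, hr0⟩
    · -- arm : r₀ = j < c₀
      apply card_le_ncard_of_map hρ hξ (fun M hM => hM.1) (EF mm)
        (fun l => ((1 : Fin 2), l, l + (c₀ - j)))
      · intro l hl
        simp only [hEF, Finset.mem_filter, Finset.mem_range] at hl
        have hmem : ((1 : Fin 2), l, l + (c₀ - j)) ∈ diagram (bip ρf ξf) :=
          dia_mono hρ hξ hNC (by omega) (by omega)
        have hdq : dgn ((1 : Fin 2), l, l + (c₀ - j)) = dgn NC := by
          rw [dgn_mk, hNCdef, dgn_mk]; omega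
        refine ⟨hmem, ?_, ?_, ?_⟩
        · rw [hNCdef, keyLt_iff]
          exact Or.inr ⟨rfl, Or.inl (by omega)⟩
        · rw [res_dg, hdq, hv, res_dg]
        · rw [Hε l hl.1 _ hmem rfl (by rw [dpn_mk]; omega), hl.2]
      · intro l hl
        rw [dpn_mk]; omega
    · -- leg : c₀ = j < r₀
      apply card_le_ncard_of_map hρ hξ (fun M hM => hM.1) (EF mm)
        (fun l => ((1 : Fin 2), l + (r₀ - j), l))
      · intro l hl
        simp only [hEF, Finset.mem_filter, Finset.mem_range] at hl
        have hmem : ((1 : Fin 2), l + (r₀ - j), l) ∈ diagram (bip ρf ξf) :=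
          dia_mono hρ hξ hNC (by omega) (by omega)
        have hdq : dgn ((1 : Fin 2), l + (r₀ - j), l) = dgn NC := by
          rw [dgn_mk, hNCdef, dgn_mk]; omega
        refine ⟨hmem, ?_, ?_, ?_⟩
        · rw [hNCdef, keyLt_iff]
          exact Or.inr ⟨rfl, Or.inl (by omega)⟩
        · rw [res_dg, hdq, hv, res_dg]
        · rw [Hε l hl.1 _ hmem rfl (by rw [dpn_mk]; omega), hl.2]
      · intro l hl
        rw [dpn_mk]; omega
  -- exact count at B
  have hgv : ∀ M ∈ diagram (bip ρf ξf), M.1 = 1 →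
      res e (fun _ : Fin 2 => i₁) M = v → dgn M = d₀ := by
    intro M hM hM1 hresM
    exact dg_eq_of_res_eq he hs0 hs1 hρ hξ hM hNC (by rw [hM1]) (by rw [hresM, hv])
  have hexact : dpn ((mB, rB, cB) : Node 2) = (Mst v mB).ncard := by
    have h1 := count_eq_dp he hs0 hs1 hρ hξ hstd hBD
    rw [hresB, hBt] at h1
    rw [← h1, hcnt v mB]
  -- case analysis
  rcases fin2 m with hm | hm <;> rcases fin2 mB with hmB | hmB <;> subst hm <;> subst hmB
  · exact hBm rfl
  · -- m = 0, mB = 1 : B in component 1, dgn B = d₀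
    have hdgB : (cB : ℤ) - (rB : ℤ) = d₀ := by
      have := hgv _ hBD rfl hresB
      rwa [dgn_mk] at this
    have hBfin : dpn ((1 : Fin 2), rB, cB) = (EF 1).card := by
      have h1 := hupper 1 v d₀ hBm hgv (Or.inr (Or.inl rfl))
      have h2 := hlower 1
      omega
    have hveq : v = ((d₀ : ℤ) : ZMod e) + i₁ := by
      rw [hv, res_dg, ← hd₀]
    rcases harm with ⟨hr0, hc0⟩ | ⟨hc0, hr0⟩
    · -- arm : d₀ ≥ 1
      have hd0pos : 1 ≤ d₀ := by omega
      have hcB : 1 ≤ cB := by omega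
      have hWD : ((1 : Fin 2), rB, cB - 1) ∈ diagram (bip ρf ξf) :=
        dia_mono hρ hξ hBD le_rfl (by omega)
      have hWsucc : ((1 : Fin 2), rB, cB - 1 + 1) = ((1 : Fin 2), rB, cB) := by
        have h' : cB - 1 + 1 = cB := by omega
        rw [h']
      have hWt : t ((1 : Fin 2), rB, cB - 1) < tXiRho ρf ξf NC := by
        rw [← hBt]
        have hadj := hstd.2.1 ((1 : Fin 2), rB, cB - 1) hWD
          (by show ((1 : Fin 2), rB, cB - 1 + 1) ∈ _; rw [hWsucc]; exact hBD)
        rw [hWsucc] at hadj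
        exact hadj
      have hWres : res e (fun _ : Fin 2 => i₁) ((1 : Fin 2), rB, cB - 1) = v - 1 := by
        rw [res_dg, dgn_mk,
          show ((cB - 1 : ℕ) : ℤ) - (rB : ℤ) = d₀ - 1 by omega, hveq]
        push_cast
        ring
      have hcl := count_lower (i₁ := i₁) he hρ hξ hstd hWD hWt hWres rfl
      rw [hcnt (v - 1) 1] at hcl
      have hgv1 : ∀ M ∈ diagram (bip ρf ξf), M.1 = 1 →
          res e (fun _ : Fin 2 => i₁) M = v - 1 → dgn M = d₀ - 1 := by
        intro M hM hM1 hresM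
        have h2 := dg_succ_of_res_succ he hs0 hs1 hρ hξ hM hNC (by rw [hM1])
          (by rw [hresM, show v - 1 + 1 = v from by ring, hv])
        rw [← hd₀] at h2
        omega
      have hup1 := hupper 1 (v - 1) (d₀ - 1) hBm hgv1 (Or.inl rfl)
      have hWdp : dpn ((1 : Fin 2), rB, cB - 1) = dpn ((1 : Fin 2), rB, cB) := by
        rw [dpn_mk, dpn_mk]; omega
      rw [dpn_mk] at hWdp hexact hBfin hcl
      omega
    · -- leg : d₀ ≤ -1
      have hd0neg : d₀ ≤ -1 := by omega
      have hrB : 1 ≤ rB := by omega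
      have hXD : ((1 : Fin 2), rB - 1, cB) ∈ diagram (bip ρf ξf) :=
        dia_mono hρ hξ hBD (by omega) le_rfl
      have hXsucc : ((1 : Fin 2), rB - 1 + 1, cB) = ((1 : Fin 2), rB, cB) := by
        have h' : rB - 1 + 1 = rB := by omega
        rw [h']
      have hXt : t ((1 : Fin 2), rB - 1, cB) < tXiRho ρf ξf NC := by
        rw [← hBt]
        have hadj := hstd.2.2 ((1 : Fin 2), rB - 1, cB) hXD
          (by show ((1 : Fin 2), rB - 1 + 1, cB) ∈ _; rw [hXsucc]; exact hBD)
        rw [hXsucc] at hadj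
        exact hadj
      have hXres : res e (fun _ : Fin 2 => i₁) ((1 : Fin 2), rB - 1, cB) = v + 1 := by
        rw [res_dg, dgn_mk,
          show (cB : ℤ) - ((rB - 1 : ℕ) : ℤ) = d₀ + 1 by omega, hveq]
        push_cast
        ring
      have hcl := count_lower (i₁ := i₁) he hρ hξ hstd hXD hXt hXres rfl
      rw [hcnt (v + 1) 1] at hcl
      have hgv1 : ∀ M ∈ diagram (bip ρf ξf), M.1 = 1 →
          res e (fun _ : Fin 2 => i₁) M = v + 1 → dgn M = d₀ + 1 := by
        intro M hM hM1 hresM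
        have h2 := dg_succ_of_res_succ he hs0 hs1 hρ hξ hNC hM (by rw [hM1])
          (by rw [hresM, hv])
        rw [← hd₀] at h2
        omega
      have hup1 := hupper 1 (v + 1) (d₀ + 1) hBm hgv1 (Or.inr (Or.inr rfl))
      have hXdp : dpn ((1 : Fin 2), rB - 1, cB) = dpn ((1 : Fin 2), rB, cB) := by
        rw [dpn_mk, dpn_mk]; omega
      rw [dpn_mk] at hXdp hexact hBfin hcl
      omega
  · -- m = 1, mB = 0 : B in component 0
    have hBfin : dpn ((0 : Fin 2), rB, cB) = (EF 0).card := by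
      have h1 := hupper 0 v d₀ hBm hgv (Or.inr (Or.inl rfl))
      have h2 := hlower 0
      omega
    have hveq : v = ((d₀ : ℤ) : ZMod e) + i₁ := by
      rw [hv, res_dg, ← hd₀]
    have hveqB : v = (Int.cast ((cB : ℤ) - (rB : ℤ)) : ZMod e) + i₁ := by
      rw [← hresB, res_dg, dgn_mk]
    rcases lt_trichotomy ((cB : ℤ) - (rB : ℤ)) 0 with hδ | hδ | hδ
    · -- δ ≤ -1 : use up-neighbour X = (0, rB-1, cB), residue v + 1
      have hrB : 1 ≤ rB := by omega
      have hXD : ((0 : Fin 2), rB - 1, cB) ∈ diagram (bip ρf ξf) :=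
        dia_mono hρ hξ hBD (by omega) le_rfl
      have hXsucc : ((0 : Fin 2), rB - 1 + 1, cB) = ((0 : Fin 2), rB, cB) := by
        have h' : rB - 1 + 1 = rB := by omega
        rw [h']
      have hXt : t ((0 : Fin 2), rB - 1, cB) < tXiRho ρf ξf NC := by
        rw [← hBt]
        have hadj := hstd.2.2 ((0 : Fin 2), rB - 1, cB) hXD
          (by show ((0 : Fin 2), rB - 1 + 1, cB) ∈ _; rw [hXsucc]; exact hBD)
        rw [hXsucc] at hadj
        exact hadj
      have hXres : res e (fun _ : Fin 2 => i₁) ((0 : Fin 2), rB - 1, cB) = v + 1 := by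
        rw [res_dg, dgn_mk,
          show (cB : ℤ) - ((rB - 1 : ℕ) : ℤ) = ((cB : ℤ) - (rB : ℤ)) + 1 by omega, hveqB]
        push_cast
        ring
      have hcl := count_lower (i₁ := i₁) he hρ hξ hstd hXD hXt hXres rfl
      rw [hcnt (v + 1) 0] at hcl
      have hgv1 : ∀ M ∈ diagram (bip ρf ξf), M.1 = 1 →
          res e (fun _ : Fin 2 => i₁) M = v + 1 → dgn M = d₀ + 1 := by
        intro M hM hM1 hresM
        have h2 := dg_succ_of_res_succ he hs0 hs1 hρ hξ hNC hM (by rw [hM1])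
          (by rw [hresM, hv])
        rw [← hd₀] at h2
        omega
      have hup1 := hupper 0 (v + 1) (d₀ + 1) hBm hgv1 (Or.inr (Or.inr rfl))
      have hXdp : dpn ((0 : Fin 2), rB - 1, cB) = dpn ((0 : Fin 2), rB, cB) := by
        rw [dpn_mk, dpn_mk]; omega
      rw [dpn_mk] at hXdp hexact hBfin hcl
      omega
    · -- δ = 0 : impossible, forces d₀ = 0
      exfalso
      have hvv : v = i₁ := by
        rw [hveqB, hδ]
        simp
      have hc0 : ((dgn NC : ℤ) : ZMod e) = 0 := by
        rw [← hd₀]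
        have := hveq.symm.trans hvv
        -- cast d₀ + i₁ = i₁
        have h1 : ((d₀ : ℤ) : ZMod e) = 0 := by
          have h2 : ((d₀ : ℤ) : ZMod e) + i₁ = 0 + i₁ := by rw [this]; ring
          exact add_right_cancel h2
        exact h1
      have := dg_zero_of_cast_zero he hs1 hρ hξ hNC rfl hc0
      rw [← hd₀] at this
      omega
    · -- δ ≥ 1 : use left-neighbour W = (0, rB, cB - 1), residue v - 1
      have hcB : 1 ≤ cB := by omega
      have hWD : ((0 : Fin 2), rB, cB - 1) ∈ diagram (bip ρf ξf) :=
        dia_mono hρ hξ hBD le_rfl (by omega)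
      have hWsucc : ((0 : Fin 2), rB, cB - 1 + 1) = ((0 : Fin 2), rB, cB) := by
        have h' : cB - 1 + 1 = cB := by omega
        rw [h']
      have hWt : t ((0 : Fin 2), rB, cB - 1) < tXiRho ρf ξf NC := by
        rw [← hBt]
        have hadj := hstd.2.1 ((0 : Fin 2), rB, cB - 1) hWD
          (by show ((0 : Fin 2), rB, cB - 1 + 1) ∈ _; rw [hWsucc]; exact hBD)
        rw [hWsucc] at hadj
        exact hadj
      have hWres : res e (fun _ : Fin 2 => i₁) ((0 : Fin 2), rB, cB - 1) = v - 1 := by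
        rw [res_dg, dgn_mk,
          show ((cB - 1 : ℕ) : ℤ) - (rB : ℤ) = ((cB : ℤ) - (rB : ℤ)) - 1 by omega, hveqB]
        push_cast
        ring
      have hcl := count_lower (i₁ := i₁) he hρ hξ hstd hWD hWt hWres rfl
      rw [hcnt (v - 1) 0] at hcl
      have hgv1 : ∀ M ∈ diagram (bip ρf ξf), M.1 = 1 →
          res e (fun _ : Fin 2 => i₁) M = v - 1 → dgn M = d₀ - 1 := by
        intro M hM hM1 hresM
        have h2 := dg_succ_of_res_succ he hs0 hs1 hρ hξ hM hNC (by rw [hM1])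
          (by rw [hresM, show v - 1 + 1 = v from by ring, hv])
        rw [← hd₀] at h2
        omega
      have hup1 := hupper 0 (v - 1) (d₀ - 1) hBm hgv1 (Or.inl rfl)
      have hWdp : dpn ((0 : Fin 2), rB, cB - 1) = dpn ((0 : Fin 2), rB, cB) := by
        rw [dpn_mk, dpn_mk]; omega
      rw [dpn_mk] at hWdp hexact hBfin hcl
      omega
  · exact hBm rfl

end CP

end CarterPayne

open CarterPayne in
/-- Fix `e ≥ 2`, `i₁ ∈ ℤ/eℤ`, and `e`-small partitions `ρ ⊢ γ` and `ξ ⊢ γ'` (with residues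
`res (r,c) = c - r + i₁`).  For each `j` with the diagonal node `(j,j)` in the second
component of the bipartition `(ρ, ξ)`, let `H_j` be the `j`-th hook of the second
component: the nodes `(j, y)` with `y ≥ j` together with the nodes `(x, j)` with `x ≥ j`.
Then for every standard `(ρ,ξ)`-tableau `t` with the same residue sequence as `𝔱_{ξ,ρ}`
and each such `j`, the nodes `t⁻¹(𝔱_{ξ,ρ}(N))` for `N ∈ H_j` all lie in the same
component. -/
theorem statement10 (e : ℕ) (he : 2 ≤ e) (i₁ : ZMod e) (γ γ' : ℕ)
    (ρf ξf : ℕ → ℕ) (hρ : IsPartitionFun ρf) (hξ : IsPartitionFun ξf)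
    (hργ : ∑ᶠ x : ℕ, ρf x = γ) (hξγ : ∑ᶠ x : ℕ, ξf x = γ')
    (hsmallρ : ESmall e (fun _ : Fin 2 => i₁) {N ∈ diagram (bip ρf ξf) | N.1 = 0})
    (hsmallξ : ESmall e (fun _ : Fin 2 => i₁) {N ∈ diagram (bip ρf ξf) | N.1 = 1})
    (t : Node 2 → ℕ)
    (hstd : IsStandardTableau (γ + γ') (diagram (bip ρf ξf)) t)
    (hres : ∀ N ∈ diagram (bip ρf ξf), ∀ N' ∈ diagram (bip ρf ξf),
      t N = tXiRho ρf ξf N' →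
      res e (fun _ : Fin 2 => i₁) N = res e (fun _ : Fin 2 => i₁) N') :
    ∀ j : ℕ, (((1 : Fin 2), j, j) : Node 2) ∈ diagram (bip ρf ξf) →
      ∃ m : Fin 2, ∀ N ∈ diagram (bip ρf ξf), N.1 = 1 →
        ((N.2.1 = j ∧ j ≤ N.2.2) ∨ (N.2.2 = j ∧ j ≤ N.2.1)) →
        ∀ N' ∈ diagram (bip ρf ξf), t N' = tXiRho ρf ξf N → N'.1 = m := by
  classical
  have hn : (diagram (bip ρf ξf)).ncard = γ + γ' := by
    rw [CP.ncard_dia hρ hξ, hργ, hξγ]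
  have hex : ∀ N : Node 2, ∃ Z : Node 2, N ∈ diagram (bip ρf ξf) →
      (Z ∈ diagram (bip ρf ξf) ∧ t Z = tXiRho ρf ξf N) := by
    intro N
    by_cases hND : N ∈ diagram (bip ρf ξf)
    · have hmem : tXiRho ρf ξf N ∈ Set.Icc 1 (γ + γ') := by
        rw [← hn]; exact CP.s_mem_Icc hρ hξ hND
      obtain ⟨Z, hZ, htZ⟩ := hstd.1.2.2 hmem
      exact ⟨Z, fun _ => ⟨hZ, htZ⟩⟩
    · exact ⟨N, fun h => absurd h hND⟩
  choose u hu' using hex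
  have hu : ∀ N ∈ diagram (bip ρf ξf),
      u N ∈ diagram (bip ρf ξf) ∧ t (u N) = tXiRho ρf ξf N := fun N hN => hu' N hN
  have hru : ∀ N ∈ diagram (bip ρf ξf),
      res e (fun _ : Fin 2 => i₁) (u N) = res e (fun _ : Fin 2 => i₁) N :=
    fun N hN => hres (u N) (hu N hN).1 N hN (hu N hN).2
  have htinj := hstd.1.2.1
  have husurj : ∀ Z ∈ diagram (bip ρf ξf), ∃ M ∈ diagram (bip ρf ξf), u M = Z := by
    intro Z hZ
    have h1 : t Z ∈ Set.Icc 1 (diagram (bip ρf ξf)).ncard := by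
      rw [hn]; exact hstd.1.1 hZ
    have h2 : t Z ∈ tXiRho ρf ξf '' (diagram (bip ρf ξf)) := by
      rw [CP.s_image hρ hξ]; exact h1
    obtain ⟨M, hM, hsM⟩ := h2
    refine ⟨M, hM, htinj (hu M hM).1 hZ ?_⟩
    rw [(hu M hM).2, hsM]
  intro j
  induction j using Nat.strong_induction_on with
  | _ j IH =>
    intro hjj
    have hIH' : ∀ l, ∃ mε : Fin 2, l < j → ∀ M ∈ diagram (bip ρf ξf),
        M.1 = 1 → CP.dpn M = l → (u M).1 = mε := by
      intro l
      by_cases hl : l < j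
      · have hcor : ((1 : Fin 2), l, l) ∈ diagram (bip ρf ξf) :=
          CP.dia_mono hρ hξ hjj (by omega) (by omega)
        obtain ⟨mε, hmε⟩ := IH l hl hcor
        refine ⟨mε, fun _ M hM hM1 hdp => ?_⟩
        rcases M with ⟨mM, rM, cM⟩
        simp only at hM1
        subst hM1
        rw [CP.dpn_mk] at hdp
        have hhk : (rM = l ∧ l ≤ cM) ∨ (cM = l ∧ l ≤ rM) := by omega
        exact hmε ((1 : Fin 2), rM, cM) hM rfl hhk (u ((1 : Fin 2), rM, cM))
          (hu _ hM).1 (hu _ hM).2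
      · exact ⟨0, fun h => absurd h hl⟩
    choose ε hε' using hIH'
    have Hε : ∀ l, l < j → ∀ M ∈ diagram (bip ρf ξf),
        M.1 = 1 → CP.dpn M = l → (u M).1 = ε l := fun l hl => hε' l hl
    set m := (u ((1 : Fin 2), j, j)).1 with hm
    have Aarm : ∀ cc, ((1 : Fin 2), j, cc) ∈ diagram (bip ρf ξf) → j ≤ cc →
        (u ((1 : Fin 2), j, cc)).1 = m := by
      intro cc
      induction cc using Nat.strong_induction_on with
      | _ cc IHc =>
        intro hmem hjcc
        rcases Nat.eq_or_lt_of_le hjcc with heq | hlt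
        · rw [← heq]
        · apply CP.step he hsmallρ hsmallξ hρ hξ hstd hu hru husurj Hε hmem
            (Or.inl ⟨rfl, hlt⟩)
          rintro ⟨mM, rM, cM⟩ hM hM1 hdp hkey
          simp only at hM1
          subst hM1
          rw [CP.keyLt_iff] at hkey
          rcases hkey with ⟨-, h10⟩ | ⟨-, hk⟩
          · exact absurd h10 (by decide)
          rw [CP.dpn_mk] at hdp
          obtain ⟨h1, h2, h3⟩ : rM = j ∧ cM < cc ∧ j ≤ cM := by omega
          subst h1
          exact IHc cM h2 hM h3
    have Bleg : ∀ rr, ((1 : Fin 2), rr, j) ∈ diagram (bip ρf ξf) → j ≤ rr →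
        (u ((1 : Fin 2), rr, j)).1 = m := by
      intro rr
      induction rr using Nat.strong_induction_on with
      | _ rr IHr =>
        intro hmem hjrr
        rcases Nat.eq_or_lt_of_le hjrr with heq | hlt
        · rw [← heq]
        · apply CP.step he hsmallρ hsmallξ hρ hξ hstd hu hru husurj Hε hmem
            (Or.inr ⟨rfl, hlt⟩)
          rintro ⟨mM, rM, cM⟩ hM hM1 hdp hkey
          simp only at hM1
          subst hM1
          rw [CP.keyLt_iff] at hkey
          rcases hkey with ⟨-, h10⟩ | ⟨-, hk⟩
          · exact absurd h10 (by decide)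
          rw [CP.dpn_mk] at hdp
          rcases Nat.lt_or_ge rM j with hr | hr
          · omega
          rcases Nat.eq_or_lt_of_le hr with hrj | hrj
          · -- rM = j : arm cell
            have hcMj : j ≤ cM := by omega
            rw [← hrj]
            exact Aarm cM (by rw [hrj]; exact hM) hcMj
          · -- rM > j : leg cell with cM = j
            have hcMj : cM = j := by omega
            have hrMlt : rM < rr := by omega
            rw [hcMj]
            exact IHr rM hrMlt (by rw [← hcMj]; exact hM) (by omega)
    refine ⟨m, ?_⟩
    rintro ⟨mN, rN, cN⟩ hN hN1 hhook N' hN' htN'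
    simp only at hN1
    subst hN1
    have hNu : N' = u ((1 : Fin 2), rN, cN) :=
      htinj hN' (hu _ hN).1 (htN'.trans (hu _ hN).2.symm)
    rw [hNu]
    simp only at hhook
    rcases hhook with ⟨h1, h2⟩ | ⟨h1, h2⟩
    · subst h1; exact Aarm cN hN h2
    · subst h1; exact Bleg rN hN h2
end
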